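/- arXiv:1603.03191 — 7 statements merged into one kernel-verified Lean document; each statement's English description precedes it below -/
import Mathlib

section
/- Let R(ℤ) be the set of functions f : [0,∞) → ℝ that are continuous, convex, piecewise affine with all slopes in ℤ and with only finitely many discontinuities of the derivative, viewed as a semiring with addition (f,g) ↦ pointwise max and multiplication (f,g) ↦ pointwise sum. Then for every map φ : R(ℤ) → ℝ ∪ {−∞} satisfying φ(max(f,g)) = max(φ(f), φ(g)), φ(f + g) = φ(f) + φ(g), and φ(c) = c for every constant function c ∈ ℝ, there exists a unique λ ∈ [0,∞) such that φ(f) = f(λ) for all f ∈ R(ℤ). Consequently λ ↦ (f ↦ f(λ)) is a bijection from [0,∞) onto the set of such maps φ. -/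
/-- Membership in the semiring `R(ℤ)`: functions on `[0,∞)` (encoded as functions on `ℝ`
extended constantly to the left of `0`) that are continuous, convex, and piecewise affine with
slopes in `ℤ` with only finitely many discontinuities of the derivative — i.e. locally affine
with integral slope away from a finite set. -/
def RZmem (f : ℝ → ℝ) : Prop :=
  ContinuousOn f (Set.Ici 0) ∧ ConvexOn ℝ (Set.Ici 0) f ∧
  (∃ F : Finset ℝ, ∀ x ∈ Set.Ici (0 : ℝ), x ∉ F →
    ∃ (m : ℤ) (c δ : ℝ), 0 < δ ∧
      ∀ y ∈ Set.Ici (0 : ℝ) ∩ Set.Ioo (x - δ) (x + δ), f y = (m : ℝ) * y + c) ∧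
  (∀ x : ℝ, x ≤ 0 → f x = f 0)

/-!
Evaluating `φ` on the ramp `x ↦ max x 0` gives a number `λ ≥ 0`, and additivity together with
`φ(c) = c` shows that `φ` is evaluation at `λ` on every line `x ↦ m x + c` with `m ∈ ℤ`
(clamped at `0`). Since `φ(max(f, g)) = max(φ f, φ g)`, `φ` is monotone. A member `f` of `R(ℤ)`
is affine with integral slope just to the right of `λ`, and by convexity that piece is a
supporting line of `f`; from above, convexity and the eventual slope of `f` bound `f` by the
maximum of two integral lines through `(λ, f λ)`. Monotonicity squeezes `φ f` to `f λ`.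
-/

open Set Filter Topology

noncomputable def clampedLine (m : ℤ) (c : ℝ) (x : ℝ) : ℝ := m * max x 0 + c

def LocallyIntAffineAt (f : ℝ → ℝ) (x : ℝ) : Prop :=
  ∃ (m : ℤ) (c : ℝ), f =ᶠ[𝓝 x] fun y => m * y + c

section ClampedLine

variable {m : ℤ} {c x : ℝ}

lemma clampedLine_of_nonneg (hx : 0 ≤ x) : clampedLine m c x = m * x + c := by
  simp [clampedLine, max_eq_left hx]

lemma clampedLine_of_nonpos (hx : x ≤ 0) : clampedLine m c x = c := by
  simp [clampedLine, max_eq_right hx]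

lemma clampedLine_zero : clampedLine 0 c = fun _ => c := by
  funext x; simp [clampedLine]

lemma continuous_clampedLine : Continuous (clampedLine m c) := by
  unfold clampedLine; fun_prop

lemma convexOn_clampedLine : ConvexOn ℝ (Ici 0) (clampedLine m c) :=
  (((LinearMap.mul ℝ ℝ m).convexOn (convex_Ici 0)).add_const c).congr
    fun _ hx => (clampedLine_of_nonneg hx).symm

lemma clampedLine_eventuallyEq (hx : 0 < x) :
    clampedLine m c =ᶠ[𝓝 x] fun y => m * y + c :=
  (eventually_gt_nhds hx).mono fun _ hy => clampedLine_of_nonneg hy.le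

end ClampedLine

theorem IsOpen.exists_eqOn_of_locallyIntAffineAt {f : ℝ → ℝ} {s : Set ℝ} (hso : IsOpen s)
    (hs : IsPreconnected s) (hf : ∀ x ∈ s, LocallyIntAffineAt f x) :
    ∃ (m : ℤ) (c : ℝ), EqOn f (fun y => m * y + c) s := by
  rcases s.eq_empty_or_nonempty with rfl | ⟨x₀, hx₀⟩
  · exact ⟨0, 0, eqOn_empty _ _⟩
  have hderiv : ∀ x ∈ s, ∃ m : ℤ, deriv f =ᶠ[𝓝 x] fun _ => (m : ℝ) := by
    intro x hx
    obtain ⟨m, c, h⟩ := hf x hx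
    exact ⟨m, h.deriv.trans (Eventually.of_forall fun y => by simp)⟩
  -- the slope is a continuous `ℤ`-valued function on `s`, hence constant
  have hslope : ContinuousOn (fun x => ⌊deriv f x⌋) s := fun x hx => by
    obtain ⟨m, hm⟩ := hderiv x hx
    exact (continuousAt_const.congr (hm.fun_comp Int.floor).symm).continuousWithinAt
  have hint : ∀ x ∈ s, deriv f x = ⌊deriv f x⌋ := fun x hx => by
    obtain ⟨m, hm⟩ := hderiv x hx
    rw [hm.eq_of_nhds]; simp
  have hdiff : DifferentiableOn ℝ f s := fun x hx => by
    obtain ⟨m, c, h⟩ := hf x hx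
    exact ((((hasDerivAt_id x).const_mul (m : ℝ)).add_const c).congr_of_eventuallyEq
      h).differentiableAt.differentiableWithinAt
  obtain ⟨c, hc⟩ := hso.exists_eq_add_of_deriv_eq hs hdiff
    (g := fun y => (⌊deriv f x₀⌋ : ℝ) * y) (by fun_prop)
    fun x hx => by
      have hconst : ⌊deriv f x⌋ = ⌊deriv f x₀⌋ := hs.constant hslope hx hx₀
      rw [hint x hx, hconst]
      simp
  exact ⟨_, c, hc⟩

lemma rzmem_of_locallyIntAffineAt {f : ℝ → ℝ} (hc : ContinuousOn f (Ici 0))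
    (hconv : ConvexOn ℝ (Ici 0) f) (F : Finset ℝ)
    (hF : ∀ x, 0 < x → x ∉ F → LocallyIntAffineAt f x) (hleft : ∀ x ≤ 0, f x = f 0) :
    RZmem f := by
  refine ⟨hc, hconv, ⟨insert 0 F, fun x hx hxF => ?_⟩, hleft⟩
  rw [Finset.mem_insert, not_or] at hxF
  obtain ⟨m, c, h⟩ := hF x (lt_of_le_of_ne hx (Ne.symm hxF.1)) hxF.2
  obtain ⟨δ, hδ, hball⟩ := Metric.eventually_nhds_iff_ball.1 h
  exact ⟨m, c, δ, hδ, fun y hy => hball y (by rw [Real.ball_eq_Ioo]; exact hy.2)⟩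

lemma rzmem_clampedLine (m : ℤ) (c : ℝ) : RZmem (clampedLine m c) :=
  rzmem_of_locallyIntAffineAt continuous_clampedLine.continuousOn convexOn_clampedLine ∅
    (fun _ hx _ => ⟨m, c, clampedLine_eventuallyEq hx⟩)
    (fun _ hx => by rw [clampedLine_of_nonpos hx, clampedLine_of_nonpos le_rfl])

lemma rzmem_max_clampedLine (m m' : ℤ) (c c' : ℝ) :
    RZmem (fun x => max (clampedLine m c x) (clampedLine m' c' x)) := by
  refine rzmem_of_locallyIntAffineAt
    (continuous_clampedLine.max continuous_clampedLine).continuousOn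
    (convexOn_clampedLine.sup convexOn_clampedLine) {(c' - c) / (m - m')} (fun x hx hxF => ?_)
    (fun x hx => by simp only [clampedLine_of_nonpos hx, clampedLine_of_nonpos le_rfl])
  have hcont := continuous_clampedLine (m := m) (c := c)
  have hcont' := continuous_clampedLine (m := m') (c := c')
  rcases lt_trichotomy (clampedLine m c x) (clampedLine m' c' x) with hlt | heq | hgt
  · refine ⟨m', c', ?_⟩
    filter_upwards [hcont.continuousAt.eventually_lt hcont'.continuousAt hlt,
      clampedLine_eventuallyEq hx] with y hy hy'
    rw [max_eq_right hy.le, hy']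
  · rw [clampedLine_of_nonneg hx.le, clampedLine_of_nonneg hx.le] at heq
    obtain rfl : m = m' := by
      by_contra hne
      refine hxF (Finset.mem_singleton.2 ?_)
      rw [eq_div_iff (sub_ne_zero.2 (Int.cast_injective.ne hne))]
      linarith
    obtain rfl : c = c' := by linarith
    exact ⟨m, c, by filter_upwards [clampedLine_eventuallyEq hx] with y hy; rw [max_self, hy]⟩
  · refine ⟨m, c, ?_⟩
    filter_upwards [hcont'.continuousAt.eventually_lt hcont.continuousAt hgt,
      clampedLine_eventuallyEq hx] with y hy hy'
    rw [max_eq_left hy.le, hy']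

section Convex

variable {s : Set ℝ} {f : ℝ → ℝ}

theorem ConvexOn.affine_le_of_eqOn_Ico (hf : ConvexOn ℝ s f) {a b m c : ℝ} (hab : a < b)
    (hs : Ico a b ⊆ s) (heq : EqOn f (fun y => m * y + c) (Ico a b)) {x : ℝ} (hx : x ∈ s) :
    m * x + c ≤ f x := by
  obtain ⟨y, hay, hyb⟩ := exists_between hab
  have hslope : (f y - f a) / (y - a) = m := by
    rw [heq ⟨hay.le, hyb⟩, heq ⟨le_rfl, hab⟩, div_eq_iff (sub_ne_zero.2 hay.ne')]; ring
  rcases lt_or_ge x a with hxa | hax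
  · have := hf.slope_mono_adjacent hx (hs ⟨hay.le, hyb⟩) hxa hay
    rw [hslope, div_le_iff₀ (sub_pos.2 hxa)] at this
    linarith [heq ⟨le_rfl, hab⟩]
  rcases lt_or_ge x b with hxb | hbx
  · exact (heq ⟨hax, hxb⟩).ge
  · have := hf.slope_mono_adjacent (hs ⟨le_rfl, hab⟩) hx hay (hyb.trans_le hbx)
    rw [hslope, le_div_iff₀ (by linarith)] at this
    linarith [heq ⟨hay.le, hyb⟩]

theorem ConvexOn.le_of_eqOn_Ioi (hf : ConvexOn ℝ s f) {b m c : ℝ} (hs : Ioi b ⊆ s)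
    (heq : EqOn f (fun y => m * y + c) (Ioi b)) {a x : ℝ} (ha : a ∈ s) (hx : x ∈ s)
    (hax : a ≤ x) : f x ≤ f a + m * (x - a) := by
  rcases hax.eq_or_lt with rfl | hax
  · simp
  set y := max x b + 1
  have hxy : x < y := by linarith [le_max_left x b]
  have hby : b < y := by linarith [le_max_right x b]
  have hslope : (f (y + 1) - f y) / (y + 1 - y) = m := by
    rw [heq hby, heq (show b < y + 1 by linarith)]; field_simp; ring
  have h := (hf.secant_mono ha hx (hs hby) hax.ne' (by linarith) hxy.le).trans
    (hf.slope_mono_adjacent ha (hs (show b < y + 1 by linarith)) (hax.trans hxy) (lt_add_one y))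
  rw [hslope, div_le_iff₀ (sub_pos.2 hax)] at h
  linarith

theorem ConvexOn.le_chord (hf : ConvexOn ℝ s f) {a b x : ℝ} (ha : a ∈ s) (hb : b ∈ s)
    (hx : x ∈ s) (hax : a ≤ x) (hxb : x ≤ b) :
    f x ≤ f b + (f a - f b) / (b - a) * (b - x) := by
  rcases hxb.eq_or_lt with rfl | hxb
  · simp
  have h := hf.secant_mono hb ha hx (by linarith) hxb.ne hax
  rw [le_div_iff_of_neg (sub_neg.2 hxb)] at h
  have : (f a - f b) / (a - b) * (x - b) = (f a - f b) / (b - a) * (b - x) := by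
    rw [← neg_sub b a, ← neg_sub b x, div_neg, neg_mul_neg]
  linarith

end Convex

namespace RZmem

variable {f : ℝ → ℝ}

lemma exists_locallyIntAffineAt (hf : RZmem f) :
    ∃ F : Finset ℝ, ∀ x, 0 < x → x ∉ F → LocallyIntAffineAt f x := by
  obtain ⟨-, -, ⟨F, hF⟩, -⟩ := hf
  refine ⟨F, fun x hx hxF => ?_⟩
  obtain ⟨m, c, δ, hδ, h⟩ := hF x hx.le hxF
  refine ⟨m, c, ?_⟩
  filter_upwards [eventually_gt_nhds hx,
    Ioo_mem_nhds (sub_lt_self x hδ) (lt_add_of_pos_right x hδ)]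
    with y hy hyδ using h y ⟨hy.le, hyδ⟩

lemma exists_eqOn_Ico (hf : RZmem f) {a : ℝ} (ha : 0 ≤ a) :
    ∃ b, a < b ∧ ∃ (m : ℤ) (c : ℝ), EqOn f (fun y => m * y + c) (Ico a b) := by
  obtain ⟨F, hF⟩ := hf.exists_locallyIntAffineAt
  set b := (insert (a + 1) (F.filter (a < ·))).min' (Finset.insert_nonempty _ _)
  have hab : a < b := by
    simp only [b, Finset.lt_min'_iff, Finset.mem_insert, Finset.mem_filter]
    rintro y (rfl | ⟨-, hy⟩) <;> linarith
  have hgap : ∀ y ∈ Ioo a b, y ∉ F := fun y hy hyF =>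
    (Finset.min'_le _ y (by simp [hyF, hy.1])).not_gt hy.2
  obtain ⟨m, c, hmc⟩ := isOpen_Ioo.exists_eqOn_of_locallyIntAffineAt isPreconnected_Ioo
    fun y hy => hF y (ha.trans_lt hy.1) (hgap y hy)
  refine ⟨b, hab, m, c, hmc.of_subset_closure (hf.1.mono fun y hy => ha.trans hy.1)
    (by fun_prop) Ioo_subset_Ico_self ?_⟩
  rw [closure_Ioo hab.ne]
  exact Ico_subset_Icc_self

lemma exists_eqOn_Ioi (hf : RZmem f) :
    ∃ b, 0 ≤ b ∧ ∃ (m : ℤ) (c : ℝ), EqOn f (fun y => m * y + c) (Ioi b) := by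
  obtain ⟨F, hF⟩ := hf.exists_locallyIntAffineAt
  obtain ⟨R, hR⟩ := F.bddAbove
  obtain ⟨m, c, hmc⟩ := isOpen_Ioi.exists_eqOn_of_locallyIntAffineAt isPreconnected_Ioi
    fun y (hy : max R 0 < y) => hF y ((le_max_right R 0).trans_lt hy)
      fun hyF => (hR hyF).not_gt ((le_max_left R 0).trans_lt hy)
  exact ⟨max R 0, le_max_right R 0, m, c, hmc⟩

lemma exists_clampedLine_le (hf : RZmem f) {lam : ℝ} (hlam0 : 0 ≤ lam) :
    ∃ m : ℤ, ∀ x, clampedLine m (f lam - m * lam) x ≤ f x := by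
  obtain ⟨b, hlb, m, c, hmc⟩ := hf.exists_eqOn_Ico hlam0
  obtain ⟨-, hconv, -, hleft⟩ := hf
  have hfl : f lam = m * lam + c := hmc ⟨le_rfl, hlb⟩
  have hsupp : ∀ x, 0 ≤ x → m * x + c ≤ f x := fun x hx =>
    hconv.affine_le_of_eqOn_Ico hlb (fun y hy => hlam0.trans hy.1) hmc hx
  refine ⟨m, fun x => ?_⟩
  rcases le_total 0 x with hx | hx
  · rw [clampedLine_of_nonneg hx, hfl]
    linarith [hsupp x hx]
  · rw [clampedLine_of_nonpos hx, hleft x hx, hfl]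
    linarith [hsupp 0 le_rfl]

lemma exists_le_max_clampedLine (hf : RZmem f) {lam : ℝ} (hlam0 : 0 ≤ lam) :
    ∃ M K : ℤ, ∀ x,
      f x ≤ max (clampedLine M (f lam - M * lam) x) (clampedLine (-K) (f lam + K * lam) x) := by
  obtain ⟨b, hb, M, c, hMc⟩ := hf.exists_eqOn_Ioi
  obtain ⟨-, hconv, -, hleft⟩ := hf
  obtain ⟨K, hK⟩ := exists_int_ge ((f 0 - f lam) / lam)
  have hnonneg : ∀ x, 0 ≤ x →
      f x ≤ max (clampedLine M (f lam - M * lam) x) (clampedLine (-K) (f lam + K * lam) x) := by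
    intro x hx
    rcases le_total lam x with hlx | hxl
    · refine le_max_of_le_left ?_
      rw [clampedLine_of_nonneg hx]
      linarith [hconv.le_of_eqOn_Ioi (fun y hy => hb.trans hy.le) hMc hlam0 hx hlx]
    · refine le_max_of_le_right ?_
      rw [clampedLine_of_nonneg hx]
      have hchord := hconv.le_chord self_mem_Ici hlam0 hx hx hxl
      rw [sub_zero] at hchord
      have : (f 0 - f lam) / lam * (lam - x) ≤ K * (lam - x) :=
        mul_le_mul_of_nonneg_right hK (sub_nonneg.2 hxl)
      push_cast
      linarith
  refine ⟨M, K, fun x => ?_⟩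
  rcases le_total 0 x with hx | hx
  · exact hnonneg x hx
  · simpa only [hleft x hx, clampedLine_of_nonpos hx, clampedLine_of_nonpos le_rfl]
      using hnonneg 0 le_rfl

end RZmem

section Valuation

variable {φ : (ℝ → ℝ) → WithBot ℝ}

lemma map_le_map_of_le
    (hmax : ∀ f g : ℝ → ℝ, RZmem f → RZmem g →
      φ (fun x => max (f x) (g x)) = max (φ f) (φ g))
    {f g : ℝ → ℝ} (hf : RZmem f) (hg : RZmem g) (hfg : ∀ x, f x ≤ g x) :
    φ f ≤ φ g := by
  have h := hmax f g hf hg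
  rw [show (fun x => max (f x) (g x)) = g from funext fun x => max_eq_right (hfg x)] at h
  rw [h]
  exact le_max_left _ _

lemma map_clampedLine
    (hadd : ∀ f g : ℝ → ℝ, RZmem f → RZmem g → φ (fun x => f x + g x) = φ f + φ g)
    (hconst : ∀ c : ℝ, φ (fun _ => c) = (c : WithBot ℝ))
    {lam : ℝ} (hlam : φ (clampedLine 1 0) = lam) (m : ℤ) (c : ℝ) :
    φ (clampedLine m c) = ((m * lam + c : ℝ) : WithBot ℝ) := by
  have hsucc : ∀ (m : ℤ) c, φ (clampedLine (m + 1) c) = φ (clampedLine m c) + lam := by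
    intro m c
    rw [← hlam, ← hadd _ _ (rzmem_clampedLine m c) (rzmem_clampedLine 1 0)]
    congr 1
    funext x
    simp only [clampedLine]
    push_cast
    ring
  induction m using Int.induction_on generalizing c with
  | zero => simp [clampedLine_zero, hconst]
  | succ i ih =>
    rw [hsucc, ih, ← WithBot.coe_add, WithBot.coe_inj]
    push_cast
    ring
  | pred i ih =>
    have h := hsucc (-i - 1) c
    rw [sub_add_cancel, ih] at h
    cases hφ : φ (clampedLine (-i - 1) c) with
    | bot => simp [hφ] at h
    | coe a =>
      rw [hφ, ← WithBot.coe_add, WithBot.coe_inj] at h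
      rw [WithBot.coe_inj]
      push_cast at h ⊢
      linarith

lemma map_eq_eval
    (hmax : ∀ f g : ℝ → ℝ, RZmem f → RZmem g →
      φ (fun x => max (f x) (g x)) = max (φ f) (φ g))
    (hadd : ∀ f g : ℝ → ℝ, RZmem f → RZmem g → φ (fun x => f x + g x) = φ f + φ g)
    (hconst : ∀ c : ℝ, φ (fun _ => c) = (c : WithBot ℝ))
    {lam : ℝ} (hlam0 : 0 ≤ lam) (hlam : φ (clampedLine 1 0) = lam)
    {f : ℝ → ℝ} (hf : RZmem f) :
    φ f = f lam := by
  have hline := map_clampedLine hadd hconst hlam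
  apply le_antisymm
  · obtain ⟨M, K, hle⟩ := hf.exists_le_max_clampedLine hlam0
    calc φ f ≤ φ fun x =>
            max (clampedLine M (f lam - M * lam) x) (clampedLine (-K) (f lam + K * lam) x) :=
          map_le_map_of_le hmax hf (rzmem_max_clampedLine _ _ _ _) hle
      _ = (f lam : WithBot ℝ) := by
          rw [hmax _ _ (rzmem_clampedLine _ _) (rzmem_clampedLine _ _), hline, hline,
            ← WithBot.coe_max, WithBot.coe_inj]
          push_cast
          ring_nf
          exact max_self _
  · obtain ⟨m, hle⟩ := hf.exists_clampedLine_le hlam0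
    calc (f lam : WithBot ℝ) = φ (clampedLine m (f lam - m * lam)) := by rw [hline]; ring_nf
      _ ≤ φ f := map_le_map_of_le hmax (rzmem_clampedLine _ _) hf hle

end Valuation

/-- Every map `φ : R(ℤ) → ℝ ∪ {−∞}` with `φ(max(f,g)) = max(φ f, φ g)`,
`φ(f + g) = φ f + φ g` and `φ(c) = c` on constants is the evaluation at a unique point
`λ ∈ [0,∞)`; hence `λ ↦ eval_λ` is a bijection of `[0,∞)` onto the set of such maps. -/
theorem statement0 (φ : (ℝ → ℝ) → WithBot ℝ)
    (hmax : ∀ f g : ℝ → ℝ, RZmem f → RZmem g →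
      φ (fun x => max (f x) (g x)) = max (φ f) (φ g))
    (hadd : ∀ f g : ℝ → ℝ, RZmem f → RZmem g →
      φ (fun x => f x + g x) = φ f + φ g)
    (hconst : ∀ c : ℝ, φ (fun _ => c) = (c : WithBot ℝ)) :
    ∃! lam : ℝ, 0 ≤ lam ∧ ∀ f : ℝ → ℝ, RZmem f → φ f = ((f lam : ℝ) : WithBot ℝ) := by
  have hpos : ((0 : ℝ) : WithBot ℝ) ≤ φ (clampedLine 1 0) := by
    rw [← hconst 0, ← clampedLine_zero]
    exact map_le_map_of_le hmax (rzmem_clampedLine 0 0) (rzmem_clampedLine 1 0) fun x => by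
      simp [clampedLine]
  obtain ⟨lam, hlam, hlam0⟩ := WithBot.coe_le_iff.1 hpos
  refine ⟨lam, ⟨hlam0, fun f hf => map_eq_eval hmax hadd hconst hlam0 hlam hf⟩,
    fun μ ⟨hμ0, hμ⟩ => ?_⟩
  have h := hμ _ (rzmem_clampedLine 1 0)
  rw [hlam, clampedLine_of_nonneg hμ0, WithBot.coe_inj] at h
  simpa using h.symm
end

section
/- For each object Ω of C let J(Ω) be the collection of sieves S on Ω that contain a family of inclusion morphisms (morphisms given by n = 1) {Ω_i ⊆ Ω : i ∈ I} with ∪_i Ω_i = Ω. Then J is a Grothendieck topology on C, and J is subcanonical: for every object V of C the representable presheaf Hom_C(−, V) is a sheaf for J. -/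
open CategoryTheory

/-- Objects of the category `𝒞`: (possibly empty) bounded open intervals `Ω ⊆ [0,∞)`, i.e.
intervals `(a,b)` with `0 ≤ a`, or `[0,b)`. -/
structure SInt where
  carrier : Set ℝ
  is_itv : (∃ a b : ℝ, 0 ≤ a ∧ carrier = Set.Ioo a b) ∨ (∃ b : ℝ, carrier = Set.Ico 0 b)

/-- Morphisms `Ω ⟶ Ω'` are given by positive integers `n` with `nΩ ⊆ Ω'` (realized as the maps
`x ↦ nx`, so that the empty interval has exactly one morphism to any object). -/
instance : Category SInt where
  Hom Ω Ω' := {φ : Ω.carrier → Ω'.carrier // ∃ n : ℕ+, ∀ x : Ω.carrier, (φ x : ℝ) = (n : ℝ) * (x : ℝ)}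
  id Ω := ⟨fun x => x, 1, fun x => by simp⟩
  comp {A B C} f g := ⟨fun x => g.1 (f.1 x), by
    obtain ⟨n, hn⟩ := f.2
    obtain ⟨m, hm⟩ := g.2
    refine ⟨m * n, fun x => ?_⟩
    rw [hm, hn]
    push_cast
    ring⟩
  id_comp f := Subtype.ext rfl
  comp_id f := Subtype.ext rfl
  assoc f g h := Subtype.ext rfl

/-- `f : Ω' ⟶ Ω` is an inclusion morphism (`n = 1`, i.e. `Ω' ⊆ Ω`). -/
def IsInclusion {Ω' Ω : SInt} (f : Ω' ⟶ Ω) : Prop :=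
  ∀ y : Ω'.carrier, ((f.1 y : ℝ)) = (y : ℝ)

/-!
A sieve covers `Ω` when every point of `Ω` lies in a subinterval whose inclusion belongs to the
sieve. Pulling back along `z ↦ m z` intersects with preimages under multiplication, and these are
again objects. For subcanonicity, a compatible family of maps into `V` is, on each covering
subinterval, multiplication by some positive integer; compatibility on overlaps makes this
multiplier locally constant on the positive part of `Ω`, which is an interval and hence
connected, so one `n` works everywhere (the point `0` imposes nothing) and `z ↦ n z` is the
amalgamation.
-/

open Set Topology

namespace SInt

/- The normal form `[0, ∞) ∩ (a, b)` of an object is stable under intersections and under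
preimages of `z ↦ m z`. -/
lemma isItv_iff {s : Set ℝ} :
    ((∃ a b : ℝ, 0 ≤ a ∧ s = Ioo a b) ∨ (∃ b : ℝ, s = Ico 0 b)) ↔
      ∃ a b : ℝ, s = Ici 0 ∩ Ioo a b := by
  constructor
  · rintro (⟨a, b, ha, rfl⟩ | ⟨b, rfl⟩)
    · exact ⟨a, b, (inter_eq_right.mpr (Ioo_subset_Ioi_self.trans (Ioi_subset_Ici ha))).symm⟩
    · refine ⟨-1, b, ?_⟩
      ext z
      simp only [mem_Ico, mem_inter_iff, mem_Ici, mem_Ioo]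
      grind
  · rintro ⟨a, b, rfl⟩
    by_cases ha : 0 ≤ a
    · exact Or.inl ⟨a, b, ha, inter_eq_right.mpr (Ioo_subset_Ioi_self.trans (Ioi_subset_Ici ha))⟩
    · refine Or.inr ⟨b, ?_⟩
      ext z
      simp only [mem_Ico, mem_inter_iff, mem_Ici, mem_Ioo]
      grind

lemma exists_eq_Ici_inter_Ioo (A : SInt) : ∃ a b : ℝ, A.carrier = Ici 0 ∩ Ioo a b :=
  isItv_iff.mp A.is_itv

def mk' (s : Set ℝ) (h : ∃ a b : ℝ, s = Ici 0 ∩ Ioo a b) : SInt :=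
  ⟨s, isItv_iff.mpr h⟩

def inter (A B : SInt) : SInt :=
  mk' (A.carrier ∩ B.carrier) <| by
    obtain ⟨a, b, hA⟩ := A.exists_eq_Ici_inter_Ioo
    obtain ⟨c, d, hB⟩ := B.exists_eq_Ici_inter_Ioo
    exact ⟨a ⊔ c, b ⊓ d, by rw [hA, hB, ← inter_inter_distrib_left, Ioo_inter_Ioo]⟩

def preimageMul (A : SInt) (m : ℕ+) : SInt :=
  mk' ((fun z => (m : ℝ) * z) ⁻¹' A.carrier) <| by
    obtain ⟨a, b, hA⟩ := A.exists_eq_Ici_inter_Ioo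
    have hm : (0 : ℝ) < m := by exact_mod_cast m.pos
    exact ⟨a / m, b / m, by
      rw [hA, preimage_inter, preimage_const_mul_Ici₀ _ hm, preimage_const_mul_Ioo₀ _ _ hm,
        zero_div]⟩

lemma nonneg (A : SInt) {z : ℝ} (hz : z ∈ A.carrier) : 0 ≤ z := by
  obtain ⟨a, b, hA⟩ := A.exists_eq_Ici_inter_Ioo
  exact (hA ▸ hz : z ∈ Ici 0 ∩ Ioo a b).1

lemma exists_inter_Ioi_eq_Ioo (A : SInt) : ∃ a b : ℝ, A.carrier ∩ Ioi 0 = Ioo a b := by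
  obtain ⟨a, b, hA⟩ := A.exists_eq_Ici_inter_Ioo
  refine ⟨a ⊔ 0, b, ?_⟩
  rw [hA, inter_right_comm, inter_eq_right.mpr Ioi_subset_Ici_self, inter_comm, Ioo_inter_Ioi]

lemma exists_eq_of_eventually_eq {α : Type*} [Nonempty α] {A : SInt} {N : A.carrier → α}
    (hN : ∀ p : A.carrier, 0 < (p : ℝ) → ∀ᶠ q in 𝓝 p, N p = N q) :
    ∃ n, ∀ p : A.carrier, 0 < (p : ℝ) → N p = n := by
  by_cases hpos : ∃ p₀ : A.carrier, 0 < (p₀ : ℝ)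
  · obtain ⟨p₀, hp₀⟩ := hpos
    obtain ⟨a, b, hab⟩ := A.exists_inter_Ioi_eq_Ioo
    have hconn : _root_.IsPreconnected {p : A.carrier | 0 < (p : ℝ)} := by
      rw [← IsInducing.subtypeVal.isPreconnected_image]
      exact (Subtype.image_preimage_coe A.carrier (Ioi 0)).trans hab ▸ isPreconnected_Ioo
    refine ⟨N p₀, fun p hp => hconn.induction₂ (fun p q => N p = N q)
      (fun p hp => nhdsWithin_le_nhds (hN p hp)) (fun _ _ _ _ _ _ => Eq.trans)
      (fun _ _ _ _ => Eq.symm) hp hp₀⟩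
  · exact ⟨Classical.arbitrary α, fun p hp => (hpos ⟨p, hp⟩).elim⟩

variable {A B C W : SInt}

@[ext]
lemma hom_ext {f g : A ⟶ B} (h : ∀ x, (f.1 x : ℝ) = g.1 x) : f = g :=
  Subtype.ext (funext fun x => Subtype.ext (h x))

@[simp]
lemma comp_apply (f : A ⟶ B) (g : B ⟶ C) (x : A.carrier) : (f ≫ g).1 x = g.1 (f.1 x) := rfl

def ofMul (A B : SInt) (n : ℕ+) (h : ∀ z ∈ A.carrier, (n : ℝ) * z ∈ B.carrier) : A ⟶ B :=
  ⟨fun z => ⟨n * z, h z z.2⟩, n, fun _ => rfl⟩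

def ofSubset (h : A.carrier ⊆ B.carrier) : A ⟶ B :=
  ⟨fun z => ⟨z, h z.2⟩, 1, fun _ => by simp⟩

lemma isInclusion_ofSubset (h : A.carrier ⊆ B.carrier) : IsInclusion (ofSubset h) :=
  fun _ => rfl

lemma _root_.IsInclusion.subset {i : A ⟶ B} (hi : IsInclusion i) : A.carrier ⊆ B.carrier :=
  fun z hz => by simpa only [hi ⟨z, hz⟩] using (i.1 ⟨z, hz⟩).2

lemma _root_.IsInclusion.comp {i : A ⟶ B} {j : B ⟶ C} (hi : IsInclusion i)
    (hj : IsInclusion j) : IsInclusion (i ≫ j) :=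
  fun z => (hj _).trans (hi z)

lemma ofSubset_comp_eq_ofMul_comp (f : A ⟶ B) {m : ℕ+} (hm : ∀ z, (f.1 z : ℝ) = m * z)
    {i : W ⟶ B} (hi : IsInclusion i) :
    ofSubset (A := inter A (preimageMul W m)) inter_subset_left ≫ f =
      ofMul (inter A (preimageMul W m)) W m (fun _ hz => hz.2) ≫ i := by
  ext z
  simp only [comp_apply, hi _, hm]
  rfl

def Covers {Ω : SInt} (S : Sieve Ω) : Prop :=
  ∀ p ∈ Ω.carrier, ∃ (W : SInt) (i : W ⟶ Ω), IsInclusion i ∧ S.arrows i ∧ p ∈ W.carrier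

lemma Covers.pullback {Ω Ω' : SInt} {S : Sieve Ω} (hS : Covers S) (f : Ω' ⟶ Ω) :
    Covers (S.pullback f) := by
  intro p hp
  obtain ⟨m, hm⟩ := f.2
  obtain ⟨W, i, hi, hiS, hpW⟩ := hS (m * p) (hm ⟨p, hp⟩ ▸ (f.1 ⟨p, hp⟩).2)
  refine ⟨inter Ω' (preimageMul W m), ofSubset inter_subset_left,
    isInclusion_ofSubset _, ?_, hp, hpW⟩
  rw [Sieve.pullback_apply, ofSubset_comp_eq_ofMul_comp f hm hi]
  exact S.downward_closed hiS _

lemma Covers.trans {Ω : SInt} {S R : Sieve Ω} (hS : Covers S)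
    (hR : ∀ ⦃W : SInt⦄ ⦃i : W ⟶ Ω⦄, S.arrows i → Covers (R.pullback i)) : Covers R := by
  intro p hp
  obtain ⟨W, i, hi, hiS, hpW⟩ := hS p hp
  obtain ⟨W', j, hj, hjR, hpW'⟩ := hR hiS p hpW
  exact ⟨W', j ≫ i, hj.comp hi, hjR, hpW'⟩

def coverTopology : GrothendieckTopology SInt where
  sieves _ := {S | Covers S}
  top_mem' _ _ hp := ⟨_, 𝟙 _, fun _ => rfl, trivial, hp⟩
  pullback_stable' _ _ _ f hS := Covers.pullback hS f
  transitive' _ _ hS _ hR := Covers.trans hS hR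

lemma mem_coverTopology_iff {Ω : SInt} {S : Sieve Ω} :
    S ∈ coverTopology.sieves Ω ↔
      ∃ (ι : Type) (D : ι → SInt) (incl : ∀ i : ι, D i ⟶ Ω),
        (∀ i, IsInclusion (incl i)) ∧ (∀ i, S.arrows (incl i)) ∧
        (⋃ i, (D i).carrier) = Ω.carrier := by
  constructor
  · intro hS
    choose W i hi hiS hpW using hS
    refine ⟨Ω.carrier, fun p => W p p.2, fun p => i p p.2, fun p => hi p p.2,
      fun p => hiS p p.2, ?_⟩
    exact (iUnion_subset fun p : Ω.carrier => (hi p p.2).subset).antisymm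
      fun p hp => mem_iUnion.mpr ⟨⟨p, hp⟩, hpW p hp⟩
  · rintro ⟨ι, D, incl, hincl, hS, hD⟩ p hp
    obtain ⟨k, hk⟩ := mem_iUnion.mp (hD ▸ hp)
    exact ⟨D k, incl k, hincl k, hS k, hk⟩

lemma Covers.hom_ext {Ω V : SInt} {S : Sieve Ω} (hS : Covers S) {f g : Ω ⟶ V}
    (h : ∀ ⦃W : SInt⦄ (i : W ⟶ Ω), S.arrows i → i ≫ f = i ≫ g) : f = g := by
  ext p
  obtain ⟨W, i, hi, hiS, hpW⟩ := hS p p.2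
  have hip : i.1 ⟨p, hpW⟩ = p := Subtype.ext (hi _)
  simpa only [comp_apply, hip] using congrArg (fun k : W ⟶ V => (k.1 ⟨p, hpW⟩ : ℝ)) (h i hiS)

section Compatible

variable {Ω V : SInt} {S : Sieve Ω} {x : Presieve.FamilyOfElements (yoneda.obj V) S.arrows}

lemma compatible_apply_eq (hx : x.Compatible) {f : A ⟶ Ω} (hf : S.arrows f) {i : W ⟶ Ω}
    (hi : IsInclusion i) (hiS : S.arrows i) (y : A.carrier) (hy : (f.1 y : ℝ) ∈ W.carrier) :
    ((x f hf).1 y : ℝ) = (x i hiS).1 ⟨f.1 y, hy⟩ := by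
  obtain ⟨m, hm⟩ := f.2
  have hyD : (y : ℝ) ∈ (inter A (preimageMul W m)).carrier :=
    ⟨y.2, show (m : ℝ) * y ∈ W.carrier by rwa [← hm]⟩
  have hsq := hx _ _ hf hiS (ofSubset_comp_eq_ofMul_comp f hm hi)
  have hfy : (⟨f.1 y, hy⟩ : W.carrier) = ⟨m * y, hyD.2⟩ := Subtype.ext (hm y)
  rw [hfy]
  exact congrArg (fun k : _ ⟶ V => (k.1 ⟨y, hyD⟩ : ℝ)) hsq

lemma Covers.exists_mul_of_compatible (hS : Covers S) (hx : x.Compatible) :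
    ∃ n : ℕ+, ∀ ⦃W : SInt⦄ (i : W ⟶ Ω), IsInclusion i → ∀ (hiS : S.arrows i) (z : W.carrier),
      ((x i hiS).1 z : ℝ) = n * z := by
  choose U j hj hjS hpU using fun p : Ω.carrier => hS p p.2
  choose N hN using fun p : Ω.carrier => (x (j p) (hjS p)).2
  have hglue : ∀ ⦃W : SInt⦄ (i : W ⟶ Ω) (hi : IsInclusion i) (hiS : S.arrows i)
      (z : W.carrier), ((x i hiS).1 z : ℝ) = N ⟨z, hi.subset z.2⟩ * z := by
    intro W i hi hiS z
    have hz : (i.1 z : ℝ) ∈ (U ⟨z, hi.subset z.2⟩).carrier := by rw [hi]; exact hpU _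
    rw [compatible_apply_eq hx hiS (hj _) (hjS _) z hz, hN, hi]
  obtain ⟨n, hn⟩ : ∃ n, ∀ p : Ω.carrier, 0 < (p : ℝ) → N p = n := by
    refine exists_eq_of_eventually_eq fun p hp => ?_
    obtain ⟨a, b, hab⟩ := (U p).exists_inter_Ioi_eq_Ioo
    have hU : (U p).carrier ∩ Ioi 0 ∈ 𝓝 (p : ℝ) := hab ▸ isOpen_Ioo.mem_nhds (hab ▸ ⟨hpU p, hp⟩)
    filter_upwards [continuous_subtype_val.continuousAt.preimage_mem_nhds hU] with q ⟨hqU, hq⟩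
    have hpq := hglue (j p) (hj p) (hjS p) ⟨q, hqU⟩
    rw [hN] at hpq
    exact_mod_cast mul_right_cancel₀ hq.ne' hpq
  refine ⟨n, fun W i hi hiS z => ?_⟩
  rw [hglue i hi hiS z]
  rcases (nonneg _ (hi.subset z.2)).eq_or_lt with hz | hz
  · simp [← hz]
  · rw [hn _ hz]

lemma Covers.exists_isAmalgamation (hS : Covers S) (hx : x.Compatible) :
    ∃ t, x.IsAmalgamation t := by
  obtain ⟨n, hn⟩ := hS.exists_mul_of_compatible hx
  have hnV : ∀ p ∈ Ω.carrier, (n : ℝ) * p ∈ V.carrier := by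
    intro p hp
    obtain ⟨W, i, hi, hiS, hpW⟩ := hS p hp
    simpa only [hn i hi hiS] using ((x i hiS).1 ⟨p, hpW⟩).2
  refine ⟨ofMul Ω V n hnV, fun A f hf => SInt.hom_ext fun y => ?_⟩
  obtain ⟨W, i, hi, hiS, hyW⟩ := hS _ (f.1 y).2
  rw [compatible_apply_eq hx hf hi hiS y hyW, hn i hi hiS]
  rfl

end Compatible

theorem isSheaf_yoneda_obj (V : SInt) : Presieve.IsSheaf coverTopology (yoneda.obj V) :=
  fun _ _ hS => Presieve.IsSeparatedFor.isSheafFor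
    (fun _ _ _ h₁ h₂ => Covers.hom_ext hS fun _ i hiS => (h₁ i hiS).trans (h₂ i hiS).symm)
    (fun _ hx => Covers.exists_isAmalgamation hS hx)

end SInt

/-- The collection `J(Ω)` of sieves on `Ω` containing a family of inclusion
morphisms `{Ω_i ⊆ Ω}` with `∪ Ω_i = Ω` is a Grothendieck topology on `𝒞`, and it is
subcanonical: every representable presheaf `Hom(−, V)` is a `J`-sheaf. -/
theorem statement1 :
    ∃ J : GrothendieckTopology SInt,
      (∀ (Ω : SInt) (S : Sieve Ω),
        S ∈ J.sieves Ω ↔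
          ∃ (ι : Type) (D : ι → SInt) (incl : ∀ i : ι, D i ⟶ Ω),
            (∀ i, IsInclusion (incl i)) ∧ (∀ i, S.arrows (incl i)) ∧
            (⋃ i, (D i).carrier) = Ω.carrier) ∧
      (∀ V : SInt, Presieve.IsSheaf J (yoneda.obj V)) :=
  ⟨SInt.coverTopology, fun _ _ => SInt.mem_coverTopology_iff, SInt.isSheaf_yoneda_obj⟩
end

section
/- Fix a prime p. (a) Every group homomorphism φ : ℤ[1/p] → ℝ is given by φ(x) = λ·x with λ = φ(1); consequently, every subgroup H ⊆ ℝ that is isomorphic as an abstract group to ℤ[1/p] is of the form H = λ·ℤ[1/p] for some λ > 0. (b) For λ, λ' > 0 one has λ·ℤ[1/p] = λ'·ℤ[1/p] if and only if λ/λ' = p^k for some k ∈ ℤ. Hence λ ↦ λ·ℤ[1/p] induces a bijection from ℝ_{>0}/p^ℤ onto the set of subgroups of ℝ isomorphic to ℤ[1/p]. -/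
/-- The set `H_p = ℤ[1/p] = {a / p^n : a ∈ ℤ, n ∈ ℕ}` inside `ℝ`. -/
def HpSet (p : ℕ) : Set ℝ := {x : ℝ | ∃ (a : ℤ) (n : ℕ), x = (a : ℝ) / (p : ℝ) ^ n}

/-- `H_p = ℤ[1/p]` as an additive subgroup of `ℝ` (for `p` prime). -/
def Hp (p : ℕ) (hp : p.Prime) : AddSubgroup ℝ where
  carrier := HpSet p
  zero_mem' := ⟨0, 0, by simp⟩
  add_mem' := by
    rintro x y ⟨a, n, rfl⟩ ⟨b, m, rfl⟩
    refine ⟨a * (p : ℤ) ^ m + b * (p : ℤ) ^ n, n + m, ?_⟩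
    have hp0 : (p : ℝ) ≠ 0 := by exact_mod_cast hp.ne_zero
    have h1 : (p : ℝ) ^ n ≠ 0 := pow_ne_zero _ hp0
    have h2 : (p : ℝ) ^ m ≠ 0 := pow_ne_zero _ hp0
    rw [div_add_div _ _ h1 h2, div_eq_div_iff (mul_ne_zero h1 h2) (pow_ne_zero _ hp0)]
    push_cast
    ring
  neg_mem' := by
    rintro x ⟨a, n, rfl⟩
    exact ⟨-a, n, by push_cast; ring⟩

lemma one_mem_Hp (p : ℕ) (hp : p.Prime) : (1 : ℝ) ∈ Hp p hp :=
  ⟨1, 0, by norm_num⟩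

/-!
A homomorphism `φ : ℤ[1/p] → ℝ` is determined by `φ 1`, because every element of `ℤ[1/p]` is
commensurable with `1` and `ℝ` is torsion-free; so a subgroup of `ℝ` isomorphic to `ℤ[1/p]` is
the image `λ · ℤ[1/p]` of an injective such `φ`, with `λ = ±φ 1`. Two such images coincide iff
`λ / λ'` and its inverse both lie in `ℤ[1/p]`, i.e. `λ / λ'` is a positive unit of `ℤ[1/p]`, and
by unique factorisation these units are exactly the powers `p ^ k`, `k ∈ ℤ`.
-/

theorem AddMonoidHom.map_mul_eq_of_zsmul_eq {G : AddSubgroup ℝ} (φ : G →+ ℝ) {u x : G}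
    {n a : ℤ} (hn : n ≠ 0) (h : n • x = a • u) : φ x * u = φ u * x := by
  have hφ : n * φ x = a * φ u := by simpa only [map_zsmul, zsmul_eq_mul] using congrArg φ h
  have hval : n * (x : ℝ) = a * u := by
    simpa only [AddSubgroup.coe_zsmul, zsmul_eq_mul] using congrArg Subtype.val h
  refine mul_left_cancel₀ (Int.cast_ne_zero.2 hn : (n : ℝ) ≠ 0) ?_
  linear_combination (u : ℝ) * hφ - φ u * hval

lemma map_Hp_eq_mul (p : ℕ) (hp : p.Prime) (φ : Hp p hp →+ ℝ) (x : Hp p hp) :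
    φ x = φ ⟨1, one_mem_Hp p hp⟩ * (x : ℝ) := by
  obtain ⟨a, n, hx⟩ := x.2
  have hpn : (p : ℝ) ^ n ≠ 0 := pow_ne_zero _ (Nat.cast_ne_zero.2 hp.ne_zero)
  have hsmul : ((p : ℤ) ^ n) • x = a • (⟨1, one_mem_Hp p hp⟩ : Hp p hp) := by
    ext
    simp only [AddSubgroup.coe_zsmul, zsmul_eq_mul, hx]
    push_cast
    field_simp
  simpa using φ.map_mul_eq_of_zsmul_eq (pow_ne_zero n (Int.natCast_ne_zero.2 hp.ne_zero)) hsmul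

section HpSet

variable {p : ℕ}

lemma one_mem_HpSet : (1 : ℝ) ∈ HpSet p := ⟨1, 0, by norm_num⟩

lemma neg_mem_HpSet {x : ℝ} (hx : x ∈ HpSet p) : -x ∈ HpSet p := by
  obtain ⟨a, n, rfl⟩ := hx
  exact ⟨-a, n, by push_cast; ring⟩

lemma mul_mem_HpSet {x y : ℝ} (hx : x ∈ HpSet p) (hy : y ∈ HpSet p) : x * y ∈ HpSet p := by
  obtain ⟨a, n, rfl⟩ := hx
  obtain ⟨b, m, rfl⟩ := hy
  exact ⟨a * b, n + m, by rw [div_mul_div_comm, pow_add]; push_cast; rfl⟩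

lemma zpow_mem_HpSet (k : ℤ) : (p : ℝ) ^ k ∈ HpSet p := by
  obtain ⟨m, rfl | rfl⟩ := k.eq_nat_or_neg
  · exact ⟨p ^ m, 0, by simp⟩
  · exact ⟨1, m, by simp⟩

lemma exists_zpow_eq_of_mem_HpSet (hp : p.Prime) {r : ℝ} (hr : 0 < r) (hr₁ : r ∈ HpSet p)
    (hr₂ : r⁻¹ ∈ HpSet p) : ∃ k : ℤ, r = (p : ℝ) ^ k := by
  obtain ⟨a, n, rfl⟩ := hr₁
  obtain ⟨b, m, hb⟩ := hr₂
  have hpn : (0 : ℝ) < (p : ℝ) ^ n := pow_pos (Nat.cast_pos.2 hp.pos) n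
  have hpm : (p : ℝ) ^ m ≠ 0 := pow_ne_zero _ (Nat.cast_ne_zero.2 hp.ne_zero)
  have ha : 0 < a := by exact_mod_cast (div_pos_iff_of_pos_right hpn).1 hr
  lift a to ℕ using ha.le
  have hab : (a : ℤ) * b = ((p ^ (n + m) : ℕ) : ℤ) := by
    have ha0 : ((a : ℤ) : ℝ) ≠ 0 := by exact_mod_cast ha.ne'
    rw [inv_div, div_eq_div_iff ha0 hpm] at hb
    have : ((a : ℤ) : ℝ) * b = (p : ℝ) ^ (n + m) := by rw [pow_add]; linear_combination -hb
    exact_mod_cast this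
  obtain ⟨i, -, rfl⟩ := (Nat.dvd_prime_pow hp).1 (Int.natCast_dvd_natCast.1 ⟨b, hab.symm⟩)
  refine ⟨i - n, ?_⟩
  rw [zpow_sub₀ (Nat.cast_ne_zero.2 hp.ne_zero), zpow_natCast, zpow_natCast]
  push_cast
  rfl

lemma image_mul_HpSet_subset (k : ℤ) (lam : ℝ) :
    (fun t => lam * (p : ℝ) ^ k * t) '' HpSet p ⊆ (fun t => lam * t) '' HpSet p := by
  rintro _ ⟨t, ht, rfl⟩
  exact ⟨(p : ℝ) ^ k * t, mul_mem_HpSet (zpow_mem_HpSet k) ht, by ring⟩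

lemma div_mem_HpSet_of_mem_image {lam lam' : ℝ} (hl' : lam' ≠ 0)
    (h : lam ∈ (fun t => lam' * t) '' HpSet p) : lam / lam' ∈ HpSet p := by
  obtain ⟨t, ht, rfl⟩ := h
  rwa [mul_div_cancel_left₀ t hl']

lemma mem_image_mul_HpSet (lam : ℝ) : lam ∈ (fun t => lam * t) '' HpSet p :=
  ⟨1, one_mem_HpSet, mul_one lam⟩

lemma image_abs_mul_HpSet (lam : ℝ) :
    (fun t => |lam| * t) '' HpSet p = (fun t => lam * t) '' HpSet p := by
  rcases abs_choice lam with h | h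
  · rw [h]
  · rw [h]
    ext x
    constructor <;> rintro ⟨t, ht, rfl⟩ <;> exact ⟨-t, neg_mem_HpSet ht, by ring⟩

lemma image_mul_HpSet_eq_iff (hp : p.Prime) {lam lam' : ℝ} (hl : 0 < lam) (hl' : 0 < lam') :
    (fun t => lam * t) '' HpSet p = (fun t => lam' * t) '' HpSet p ↔
      ∃ k : ℤ, lam / lam' = (p : ℝ) ^ k := by
  constructor
  · intro h
    have hr₁ : lam / lam' ∈ HpSet p :=
      div_mem_HpSet_of_mem_image hl'.ne' (h ▸ mem_image_mul_HpSet lam)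
    have hr₂ : lam' / lam ∈ HpSet p :=
      div_mem_HpSet_of_mem_image hl.ne' (h ▸ mem_image_mul_HpSet lam')
    exact exists_zpow_eq_of_mem_HpSet hp (div_pos hl hl') hr₁ (by rwa [inv_div])
  · rintro ⟨k, hk⟩
    have hlam : lam = lam' * (p : ℝ) ^ k := by rw [← hk, mul_div_cancel₀ _ hl'.ne']
    have hlam' : lam' = lam * (p : ℝ) ^ (-k) := by
      rw [hlam, zpow_neg, mul_inv_cancel_right₀ (zpow_ne_zero k (Nat.cast_ne_zero.2 hp.ne_zero))]
    refine subset_antisymm ?_ ?_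
    · rw [hlam]
      exact image_mul_HpSet_subset k lam'
    · conv_lhs => rw [hlam']
      exact image_mul_HpSet_subset (-k) lam

end HpSet

lemma coe_eq_image_mul_HpSet_of_equiv (p : ℕ) (hp : p.Prime) {H : AddSubgroup ℝ}
    (e : H ≃+ Hp p hp) :
    (H : Set ℝ) = (fun t => H.subtype (e.symm ⟨1, one_mem_Hp p hp⟩) * t) '' HpSet p := by
  set φ : Hp p hp →+ ℝ := H.subtype.comp e.symm.toAddMonoidHom
  calc (H : Set ℝ) = Set.range (Subtype.val ∘ e.symm) := by
        rw [EquivLike.range_comp, Subtype.range_coe]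
    _ = Set.range (fun x : Hp p hp => φ ⟨1, one_mem_Hp p hp⟩ * x) := by
        congr 1
        funext x
        exact map_Hp_eq_mul p hp φ x
    _ = _ := (Set.image_eq_range _ _).symm

lemma exists_image_mul_HpSet_of_equiv (p : ℕ) (hp : p.Prime) {H : AddSubgroup ℝ}
    (e : H ≃+ Hp p hp) : ∃ lam : ℝ, 0 < lam ∧ (H : Set ℝ) = (fun t => lam * t) '' HpSet p := by
  refine ⟨|H.subtype (e.symm ⟨1, one_mem_Hp p hp⟩)|, abs_pos.2 ?_, ?_⟩
  · simp
  · rw [image_abs_mul_HpSet]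
    exact coe_eq_image_mul_HpSet_of_equiv p hp e

lemma nonempty_map_mulLeft_equiv_Hp (p : ℕ) (hp : p.Prime) {lam : ℝ} (hl : lam ≠ 0) :
    Nonempty ((Hp p hp).map (AddMonoidHom.mulLeft lam) ≃+ Hp p hp) :=
  ⟨(AddSubgroup.equivMapOfInjective _ _ (mul_right_injective₀ hl)).symm⟩

/-- (a) every additive group homomorphism `φ : ℤ[1/p] → ℝ` is multiplication by
`λ = φ(1)`, and every subgroup of `ℝ` abstractly isomorphic to `ℤ[1/p]` is of the form
`λ · ℤ[1/p]` with `λ > 0`; (b) `λ · ℤ[1/p] = λ' · ℤ[1/p]` iff `λ/λ'` is an integral power of `p`;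
moreover every `λ · ℤ[1/p]` (`λ > 0`) is a subgroup of `ℝ` isomorphic to `ℤ[1/p]`, so that
`λ ↦ λ · ℤ[1/p]` induces a bijection of `ℝ_{>0}/p^ℤ` with the set of such subgroups. -/
theorem statement3 (p : ℕ) (hp : p.Prime) :
    (∀ φ : Hp p hp →+ ℝ, ∀ x : Hp p hp,
        φ x = φ ⟨1, one_mem_Hp p hp⟩ * (x : ℝ)) ∧
    (∀ H : AddSubgroup ℝ, Nonempty (H ≃+ Hp p hp) →
        ∃ lam : ℝ, 0 < lam ∧ (H : Set ℝ) = (fun t => lam * t) '' HpSet p) ∧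
    (∀ lam lam' : ℝ, 0 < lam → 0 < lam' →
        ((fun t => lam * t) '' HpSet p = (fun t => lam' * t) '' HpSet p ↔
          ∃ k : ℤ, lam / lam' = (p : ℝ) ^ k)) ∧
    (∀ lam : ℝ, 0 < lam → ∃ H : AddSubgroup ℝ,
        (H : Set ℝ) = (fun t => lam * t) '' HpSet p ∧ Nonempty (H ≃+ Hp p hp)) := by
  refine ⟨map_Hp_eq_mul p hp, fun H ⟨e⟩ => exists_image_mul_HpSet_of_equiv p hp e,
    fun _ _ hl hl' => image_mul_HpSet_eq_iff hp hl hl', fun lam hl => ?_⟩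
  exact ⟨(Hp p hp).map (AddMonoidHom.mulLeft lam), rfl, nonempty_map_mulLeft_equiv_Hp p hp hl.ne'⟩
end

section
/- Fix a prime p. Let f : (0,∞) → ℝ be continuous with f(pλ) = f(λ) for all λ > 0, and let 0 < λ_0 < λ_1 < … < λ_{n−1} < λ_n = pλ_0 be such that f is affine with slope h_j ∈ H_p on the interval [λ_{j−1}, λ_j] for each j = 1, …, n. Then the total order of f on a fundamental domain vanishes: Σ_{j=1}^{n−1} λ_j·(h_{j+1} − h_j) + λ_0·(h_1 − p·h_n) = 0. -/
/-!
On `[λ_{j-1}, λ_j]` the increment of `f` is `h_j (λ_j - λ_{j-1})`, so summing over a fundamental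
domain gives `Σ_j h_j (λ_j - λ_{j-1}) = f(pλ_0) - f(λ_0) = 0`. Summation by parts turns this sum
into `h_n λ_n - h_1 λ_0` minus the sum of the interior orders, and `λ_n = pλ_0` identifies the
boundary term with minus the order at `λ_0`.
-/

open Finset

lemma sub_eq_mul_sub_of_eqOn_Icc {f : ℝ → ℝ} {a b s c : ℝ} (hab : a ≤ b)
    (hf : ∀ x ∈ Set.Icc a b, f x = s * x + c) : f b - f a = s * (b - a) := by
  rw [hf b ⟨hab, le_rfl⟩, hf a ⟨le_rfl, hab⟩]
  ring

lemma sum_range_mul_sub_add_sum_Ico_mul_sub {R : Type*} [CommRing R] (x y : ℕ → R) {n : ℕ}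
    (hn : 1 ≤ n) :
    ∑ i ∈ range n, y (i + 1) * (x (i + 1) - x i) + ∑ j ∈ Ico 1 n, x j * (y (j + 1) - y j) =
      y n * x n - y 1 * x 0 := by
  induction n, hn using Nat.le_induction with
  | base => simp [mul_sub]
  | succ m hm ih =>
    rw [sum_range_succ, sum_Ico_succ_top hm]
    linear_combination ih

theorem statement4_general (p : ℕ)
    (f : ℝ → ℝ)
    (hper : ∀ lam : ℝ, 0 < lam → f (p * lam) = f lam)
    (n : ℕ) (hn : 1 ≤ n) (lam h : ℕ → ℝ)
    (hlam0 : 0 < lam 0)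
    (hmono : ∀ j, j < n → lam j < lam (j + 1))
    (hlamn : lam n = p * lam 0)
    (haff : ∀ j, 1 ≤ j → j ≤ n →
      ∃ c : ℝ, ∀ x ∈ Set.Icc (lam (j - 1)) (lam j), f x = h j * x + c) :
    ∑ j ∈ Finset.Ico 1 n, lam j * (h (j + 1) - h j) + lam 0 * (h 1 - p * h n) = 0 := by
  have hincr : ∀ i ∈ range n,
      f (lam (i + 1)) - f (lam i) = h (i + 1) * (lam (i + 1) - lam i) := by
    intro i hi
    have hin := mem_range.mp hi
    obtain ⟨c, hc⟩ := haff (i + 1) (Nat.le_add_left 1 i) hin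
    exact sub_eq_mul_sub_of_eqOn_Icc (hmono i hin).le hc
  have htotal : ∑ i ∈ range n, h (i + 1) * (lam (i + 1) - lam i) = 0 := by
    rw [← sum_congr rfl hincr, sum_range_sub (fun i => f (lam i)), hlamn, hper _ hlam0, sub_self]
  have hparts := sum_range_mul_sub_add_sum_Ico_mul_sub lam h hn
  rw [htotal, hlamn] at hparts
  linear_combination hparts

/-- For a continuous `p`-periodic (multiplicatively) function which is affine
with slope `h_j ∈ H_p` on each interval `[λ_{j-1}, λ_j]` of a subdivision
`λ_0 < λ_1 < … < λ_n = pλ_0`, the total order on a fundamental domain vanishes: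
`Σ_{j=1}^{n−1} λ_j (h_{j+1} − h_j) + λ_0 (h_1 − p h_n) = 0`. -/
theorem statement4 (p : ℕ) (hp : p.Prime)
    (f : ℝ → ℝ) (hcont : ContinuousOn f (Set.Ioi 0))
    (hper : ∀ lam : ℝ, 0 < lam → f (p * lam) = f lam)
    (n : ℕ) (hn : 1 ≤ n) (lam h : ℕ → ℝ)
    (hlam0 : 0 < lam 0)
    (hmono : ∀ j, j < n → lam j < lam (j + 1))
    (hlamn : lam n = p * lam 0)
    (hHp : ∀ j, 1 ≤ j → j ≤ n → h j ∈ HpSet p)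
    (haff : ∀ j, 1 ≤ j → j ≤ n →
      ∃ c : ℝ, ∀ x ∈ Set.Icc (lam (j - 1)) (lam j), f x = h j * x + c) :
    ∑ j ∈ Finset.Ico 1 n, lam j * (h (j + 1) - h j) + lam 0 * (h 1 - p * h n) = 0 :=
  statement4_general p f hper n hn lam h hlam0 hmono hlamn haff
end

section
/- Fix a prime p. (i) If λ, λ' > 0 satisfy λ·H_p = λ'·H_p as subgroups of ℝ, then for every h ∈ λ·H_p one has χ(h/λ) = χ(h/λ') in ℤ/(p−1)ℤ. (ii) Let f : (0,∞) → ℝ be continuous with f(pλ) = f(λ) for all λ > 0, and let 0 < λ_0 < λ_1 < … < λ_{n−1} < λ_n = pλ_0 be such that f is affine with slope h_j ∈ H_p on [λ_{j−1}, λ_j] for j = 1, …, n. Then Σ_{j=1}^{n−1} χ(h_{j+1} − h_j) + χ(h_1 − p·h_n) = 0 in ℤ/(p−1)ℤ. -/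
theorem ZMod.natCast_self_eq_one_of_pos {p : ℕ} (hp : 0 < p) : (p : ZMod (p - 1)) = 1 := by
  have : ((p - 1 + 1 : ℕ) : ZMod (p - 1)) = 1 := by simp
  rwa [Nat.sub_add_cancel hp] at this

namespace HpSet

variable {p : ℕ}

theorem one_mem : (1 : ℝ) ∈ HpSet p := ⟨1, 0, by simp⟩

theorem natCast_mul_mem {x : ℝ} (hx : x ∈ HpSet p) : (p : ℝ) * x ∈ HpSet p := by
  obtain ⟨a, n, rfl⟩ := hx
  exact ⟨p * a, n, by push_cast; ring⟩

theorem div_mem_of_image_mul_eq {μ ν : ℝ} (hν : ν ≠ 0)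
    (h : (fun t ↦ μ * t) '' HpSet p = (fun t ↦ ν * t) '' HpSet p) : μ / ν ∈ HpSet p := by
  obtain ⟨t, ht, hνt⟩ : μ ∈ (fun t ↦ ν * t) '' HpSet p :=
    h ▸ ⟨1, one_mem, mul_one μ⟩
  rwa [← hνt, mul_div_cancel_left₀ _ hν]

theorem exists_eq_pow_div_pow_of_inv_mem (hp : p.Prime) {r : ℝ} (hr : 0 < r)
    (hr_mem : r ∈ HpSet p) (hr_inv : r⁻¹ ∈ HpSet p) :
    ∃ s n : ℕ, r = (p : ℝ) ^ s / (p : ℝ) ^ n := by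
  obtain ⟨a, n, rfl⟩ := hr_mem
  obtain ⟨b, m, hb⟩ := hr_inv
  have hp0 : (p : ℝ) ≠ 0 := by exact_mod_cast hp.ne_zero
  have ha : 0 < a := by
    have : (0 : ℝ) < a := (div_pos_iff_of_pos_right (by positivity)).mp hr
    exact_mod_cast this
  have hab : a * b = (p : ℤ) ^ (n + m) := by
    have : (a : ℝ) * b = (p : ℝ) ^ (n + m) := by
      rw [inv_div, div_eq_div_iff (by positivity) (by positivity)] at hb
      rw [pow_add]
      linarith
    exact_mod_cast this
  have ha_dvd : a.natAbs ∣ p ^ (n + m) := by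
    simpa [Int.natAbs_pow] using Int.natAbs_dvd_natAbs.mpr (Dvd.intro b hab)
  obtain ⟨s, -, hs⟩ := (Nat.dvd_prime_pow hp).mp ha_dvd
  refine ⟨s, n, ?_⟩
  rw [← Int.natAbs_of_nonneg ha.le, hs]
  push_cast
  rfl

end HpSet

section Character

variable {p : ℕ} (hp : 0 < p) {χ : ℝ → ZMod (p - 1)}
  (hχ : ∀ (a : ℤ) (n : ℕ), χ ((a : ℝ) / (p : ℝ) ^ n) = (a : ZMod (p - 1)))
include hp hχ

theorem chi_sub {x y : ℝ} (hx : x ∈ HpSet p) (hy : y ∈ HpSet p) : χ (x - y) = χ x - χ y := by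
  obtain ⟨a, n, rfl⟩ := hx
  obtain ⟨b, m, rfl⟩ := hy
  have hp0 : (p : ℝ) ≠ 0 := by exact_mod_cast hp.ne'
  have : (a : ℝ) / (p : ℝ) ^ n - b / (p : ℝ) ^ m =
      ((a * p ^ m - b * p ^ n : ℤ) : ℝ) / (p : ℝ) ^ (n + m) := by
    push_cast
    field_simp
    ring
  rw [this, hχ, hχ, hχ]
  push_cast [ZMod.natCast_self_eq_one_of_pos hp]
  ring

theorem chi_mul_pow_div_pow {x : ℝ} (hx : x ∈ HpSet p) (s n : ℕ) :
    χ (x * ((p : ℝ) ^ s / (p : ℝ) ^ n)) = χ x := by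
  obtain ⟨a, k, rfl⟩ := hx
  have hp0 : (p : ℝ) ≠ 0 := by exact_mod_cast hp.ne'
  have : (a : ℝ) / (p : ℝ) ^ k * ((p : ℝ) ^ s / (p : ℝ) ^ n) =
      ((a * p ^ s : ℤ) : ℝ) / (p : ℝ) ^ (k + n) := by
    push_cast
    field_simp
    ring
  rw [this, hχ, hχ]
  push_cast [ZMod.natCast_self_eq_one_of_pos hp]
  ring

theorem chi_natCast_mul {x : ℝ} (hx : x ∈ HpSet p) : χ ((p : ℝ) * x) = χ x := by
  simpa [mul_comm] using chi_mul_pow_div_pow hp hχ hx 1 0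

theorem sum_chi_sub_add_chi_sub_natCast_mul {n : ℕ} (hn : 1 ≤ n) {h : ℕ → ℝ}
    (hh : ∀ j, 1 ≤ j → j ≤ n → h j ∈ HpSet p) :
    ∑ j ∈ Finset.Ico 1 n, χ (h (j + 1) - h j) + χ (h 1 - p * h n) = 0 := by
  have h_one := hh 1 le_rfl hn
  have h_last := hh n hn le_rfl
  have telescope : ∑ j ∈ Finset.Ico 1 n, χ (h (j + 1) - h j) = χ (h n) - χ (h 1) := by
    rw [← Finset.sum_Ico_sub (fun j ↦ χ (h j)) hn]
    refine Finset.sum_congr rfl fun j hj ↦ ?_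
    obtain ⟨hj1, hjn⟩ := Finset.mem_Ico.mp hj
    exact chi_sub hp hχ (hh _ (by omega) hjn) (hh j hj1 hjn.le)
  rw [telescope, chi_sub hp hχ h_one (HpSet.natCast_mul_mem h_last),
    chi_natCast_mul hp hχ h_last]
  abel

end Character

theorem chi_div_eq_chi_div_of_image_mul_eq {p : ℕ} (hp : p.Prime) {χ : ℝ → ZMod (p - 1)}
    (hχ : ∀ (a : ℤ) (n : ℕ), χ ((a : ℝ) / (p : ℝ) ^ n) = (a : ZMod (p - 1)))
    {lam lam' : ℝ} (hl : 0 < lam) (hl' : 0 < lam')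
    (heq : (fun t ↦ lam * t) '' HpSet p = (fun t ↦ lam' * t) '' HpSet p)
    {x : ℝ} (hx : x ∈ (fun t ↦ lam * t) '' HpSet p) : χ (x / lam) = χ (x / lam') := by
  obtain ⟨s, n, hsn⟩ := HpSet.exists_eq_pow_div_pow_of_inv_mem hp (div_pos hl hl')
    (HpSet.div_mem_of_image_mul_eq hl'.ne' heq)
    (by simpa only [inv_div] using HpSet.div_mem_of_image_mul_eq hl.ne' heq.symm)
  obtain ⟨t, ht, rfl⟩ := hx
  have hx' : lam * t / lam' = t * (lam / lam') := by ring
  rw [mul_div_cancel_left₀ _ hl.ne', hx', hsn, chi_mul_pow_div_pow hp.pos hχ ht]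

/-- Here `χ : H_p → ℤ/(p−1)ℤ` is any (the) map sending `a/p^n` to `a mod (p−1)`.
(i) If `λ·H_p = λ'·H_p` (with `λ, λ' > 0`) then `χ(h/λ) = χ(h/λ')` for every `h ∈ λ·H_p`.
(ii) For a continuous function with `f(pλ) = f(λ)`, affine with slopes `h_j ∈ H_p` on the pieces
of a subdivision `λ_0 < … < λ_n = pλ_0`, one has
`Σ_{j=1}^{n−1} χ(h_{j+1} − h_j) + χ(h_1 − p h_n) = 0` in `ℤ/(p−1)ℤ`. -/
theorem statement5 (p : ℕ) (hp : p.Prime)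
    (χ : ℝ → ZMod (p - 1))
    (hχ : ∀ (a : ℤ) (n : ℕ), χ ((a : ℝ) / (p : ℝ) ^ n) = (a : ZMod (p - 1))) :
    (∀ lam lam' : ℝ, 0 < lam → 0 < lam' →
      (fun t => lam * t) '' HpSet p = (fun t => lam' * t) '' HpSet p →
      ∀ hval ∈ (fun t => lam * t) '' HpSet p, χ (hval / lam) = χ (hval / lam')) ∧
    (∀ f : ℝ → ℝ, ContinuousOn f (Set.Ioi 0) →
      (∀ lam : ℝ, 0 < lam → f (p * lam) = f lam) →
      ∀ n : ℕ, 1 ≤ n → ∀ lam h : ℕ → ℝ, 0 < lam 0 →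
      (∀ j, j < n → lam j < lam (j + 1)) → lam n = p * lam 0 →
      (∀ j, 1 ≤ j → j ≤ n → h j ∈ HpSet p) →
      (∀ j, 1 ≤ j → j ≤ n →
        ∃ c : ℝ, ∀ x ∈ Set.Icc (lam (j - 1)) (lam j), f x = h j * x + c) →
      ∑ j ∈ Finset.Ico 1 n, χ (h (j + 1) - h j) + χ (h 1 - p * h n) = 0) :=
  ⟨fun _ _ hl hl' heq _ hx ↦ chi_div_eq_chi_div_of_image_mul_eq hp hχ hl hl' heq hx,
    fun _ _ _ _ hn _ _ _ _ _ hh _ ↦ sum_chi_sub_add_chi_sub_natCast_mul hp.pos hχ hn hh⟩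
end

section
/- Fix a prime p and let θ : (0,∞) → ℝ be the basic theta function. Then for all λ ∈ (0,∞): |θ(λ) − (λ/(p−1) − log λ / log p)| ≤ 1. -/
/-!
The error term `g(λ) = θ(λ) − λ/(p−1) + log λ / log p` is invariant under `λ ↦ pλ`: shifting the
summation index in both series gives `θ(pλ) = θ(λ) + max(0, λ−1) − max(0, 1−λ) = θ(λ) + λ − 1`.
So it suffices to bound `g` on the fundamental domain `[1, p]`, where every term of `θ` vanishes
and `g(t) = log t / log p − t/(p−1)` is concave, with the value `−1/(p−1) ≥ −1` at both endpoints
and `g ≤ log t / log p ≤ 1`.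
-/

/-- `f₊(λ) = Σ_{m≥0} max(0, 1 − p^m λ)`. -/
noncomputable def fPlus (p : ℕ) (lam : ℝ) : ℝ := ∑' m : ℕ, max 0 (1 - (p : ℝ) ^ m * lam)

/-- `f₋(λ) = Σ_{m≥1} max(0, p^{−m} λ − 1)`. -/
noncomputable def fMinus (p : ℕ) (lam : ℝ) : ℝ :=
  ∑' m : ℕ, max 0 (((p : ℝ) ^ (m + 1))⁻¹ * lam - 1)

/-- The basic theta function `θ = f₊ + f₋`. -/
noncomputable def theta (p : ℕ) (lam : ℝ) : ℝ := fPlus p lam + fMinus p lam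

open Filter Real Set

theorem summable_max_zero_of_eventually_nonpos {f : ℕ → ℝ} (hf : ∀ᶠ m in atTop, f m ≤ 0) :
    Summable fun m => max 0 (f m) := by
  obtain ⟨N, hN⟩ := eventually_atTop.1 hf
  exact summable_of_ne_finset_zero (s := Finset.range N) fun m hm =>
    max_eq_left (hN m (by simpa using hm))

theorem summable_fPlus_summand {p : ℕ} (hp : 1 < p) {lam : ℝ} (hlam : 0 < lam) :
    Summable fun m : ℕ => max 0 (1 - (p : ℝ) ^ m * lam) := by
  have hp' : (1 : ℝ) < p := by exact_mod_cast hp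
  refine summable_max_zero_of_eventually_nonpos ?_
  have hto := (tendsto_pow_atTop_atTop_of_one_lt hp').atTop_mul_const hlam
  filter_upwards [hto.eventually_ge_atTop 1] with m hm
  linarith

theorem summable_fMinus_summand {p : ℕ} (hp : 1 < p) (lam : ℝ) :
    Summable fun m : ℕ => max 0 (((p : ℝ) ^ (m + 1))⁻¹ * lam - 1) := by
  have hp' : (1 : ℝ) < p := by exact_mod_cast hp
  have hto : Tendsto (fun m : ℕ => ((p : ℝ) ^ (m + 1))⁻¹ * lam) atTop (nhds 0) := by
    simpa using ((tendsto_inv_atTop_zero.comp (tendsto_pow_atTop_atTop_of_one_lt hp')).comp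
      (tendsto_add_atTop_nat 1)).mul_const lam
  refine summable_max_zero_of_eventually_nonpos ?_
  filter_upwards [hto.eventually_lt_const zero_lt_one] with m hm
  linarith

theorem fPlus_eq_max_add_fPlus_mul {p : ℕ} (hp : 1 < p) {lam : ℝ} (hlam : 0 < lam) :
    fPlus p lam = max 0 (1 - lam) + fPlus p (p * lam) := by
  have hs := summable_fPlus_summand hp (mul_pos (by positivity : (0 : ℝ) < p) hlam)
  unfold fPlus
  rw [tsum_eq_zero_add' (by simpa only [pow_succ, mul_assoc] using hs)]
  simp only [pow_zero, one_mul, pow_succ, mul_assoc]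

theorem fMinus_mul_eq_max_add_fMinus {p : ℕ} (hp : 1 < p) (lam : ℝ) :
    fMinus p (p * lam) = max 0 (lam - 1) + fMinus p lam := by
  have hp0 : (p : ℝ) ≠ 0 := by positivity
  have hshift : ∀ m : ℕ, ((p : ℝ) ^ (m + 1 + 1))⁻¹ * (p * lam) = ((p : ℝ) ^ (m + 1))⁻¹ * lam :=
    fun m => by rw [pow_succ _ (m + 1), mul_inv, mul_assoc, inv_mul_cancel_left₀ hp0]
  unfold fMinus
  rw [tsum_eq_zero_add' (by simpa only [hshift] using summable_fMinus_summand hp lam)]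
  simp only [hshift, zero_add, pow_one, inv_mul_cancel_left₀ hp0]

theorem theta_mul {p : ℕ} (hp : 1 < p) {lam : ℝ} (hlam : 0 < lam) :
    theta p (p * lam) = theta p lam + lam - 1 := by
  have hmax : max 0 (lam - 1) - max 0 (1 - lam) = lam - 1 := by
    simpa [max_comm] using max_zero_sub_max_neg_zero_eq_self (lam - 1)
  unfold theta
  rw [fPlus_eq_max_add_fPlus_mul hp hlam, fMinus_mul_eq_max_add_fMinus hp]
  linarith

theorem theta_eq_zero_of_mem_Icc {p : ℕ} {lam : ℝ} (hlam : lam ∈ Icc 1 (p : ℝ)) :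
    theta p lam = 0 := by
  obtain ⟨h1, hp⟩ := hlam
  have hp1 : (1 : ℝ) ≤ p := h1.trans hp
  have hPlus : fPlus p lam = 0 := by
    refine (tsum_congr fun m => max_eq_left ?_).trans tsum_zero
    nlinarith [one_le_pow₀ (n := m) hp1]
  have hMinus : fMinus p lam = 0 := by
    refine (tsum_congr fun m => max_eq_left ?_).trans tsum_zero
    have hpow : (p : ℝ) ≤ (p : ℝ) ^ (m + 1) := le_self_pow₀ hp1 (by omega)
    rw [sub_nonpos, inv_mul_le_one₀ (by positivity)]
    exact hp.trans hpow
  rw [theta, hPlus, hMinus, add_zero]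

noncomputable def thetaDefect (p : ℕ) (lam : ℝ) : ℝ :=
  theta p lam - (lam / ((p : ℝ) - 1) - log lam / log p)

theorem thetaDefect_mul {p : ℕ} (hp : 1 < p) {lam : ℝ} (hlam : 0 < lam) :
    thetaDefect p (p * lam) = thetaDefect p lam := by
  have hp' : (1 : ℝ) < p := by exact_mod_cast hp
  have hlogp : log p ≠ 0 := (log_pos hp').ne'
  have hp1 : (p : ℝ) - 1 ≠ 0 := by linarith
  rw [thetaDefect, thetaDefect, theta_mul hp hlam, log_mul (by positivity) hlam.ne']
  field_simp
  ring

theorem thetaDefect_zpow_mul {p : ℕ} (hp : 1 < p) {lam : ℝ} (hlam : 0 < lam) (n : ℤ) :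
    thetaDefect p ((p : ℝ) ^ n * lam) = thetaDefect p lam := by
  have hp0 : (p : ℝ) ≠ 0 := by positivity
  induction n using Int.induction_on with
  | zero => simp
  | succ i ih =>
    rw [zpow_add_one₀ hp0, mul_comm _ (p : ℝ), mul_assoc, thetaDefect_mul hp (by positivity), ih]
  | pred i ih =>
    rw [← ih, ← thetaDefect_mul hp (by positivity), zpow_sub_one₀ hp0]
    congr 1
    field_simp

theorem abs_log_div_log_sub_div_le_one {p t : ℝ} (hp : 2 ≤ p) (ht : t ∈ Icc 1 p) :
    |log t / log p - t / (p - 1)| ≤ 1 := by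
  have hlogp : 0 < log p := log_pos (by linarith)
  have hconc : ConcaveOn ℝ (Ioi 0) ((log p)⁻¹ • log - (p - 1)⁻¹ • id) :=
    (strictConcaveOn_log_Ioi.concaveOn.smul (inv_nonneg.2 hlogp.le)).sub
      ((convexOn_id (convex_Ioi 0)).smul (inv_nonneg.2 (by linarith)))
  have hmin := hconc.min_le_of_mem_Icc (mem_Ioi.2 one_pos) (mem_Ioi.2 (by linarith)) ht
  simp only [Pi.sub_apply, Pi.smul_apply, smul_eq_mul, id, log_one] at hmin
  rw [abs_le]
  constructor
  · have hend : (log p)⁻¹ * log p - (p - 1)⁻¹ * p = (log p)⁻¹ * 0 - (p - 1)⁻¹ * 1 := by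
      have : p - 1 ≠ 0 := by linarith
      field_simp
      ring
    have : (p - 1)⁻¹ ≤ 1 := inv_le_one_of_one_le₀ (by linarith)
    rw [hend, min_self] at hmin
    rw [div_eq_inv_mul, div_eq_inv_mul]
    linarith
  · have : log t ≤ log p := log_le_log (by linarith [ht.1]) ht.2
    have : 0 ≤ t / (p - 1) := div_nonneg (by linarith [ht.1]) (by linarith)
    have : log t / log p ≤ 1 := (div_le_one hlogp).2 ‹_›
    linarith

theorem abs_thetaDefect_le_one_of_mem_Icc {p : ℕ} (hp : 2 ≤ p) {lam : ℝ}
    (hlam : lam ∈ Icc 1 (p : ℝ)) : |thetaDefect p lam| ≤ 1 := by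
  rw [thetaDefect, theta_eq_zero_of_mem_Icc hlam, zero_sub, abs_neg, abs_sub_comm]
  exact abs_log_div_log_sub_div_le_one (by exact_mod_cast hp) hlam

/-- `|θ(λ) − (λ/(p−1) − log λ / log p)| ≤ 1` for all `λ > 0`. -/
theorem statement8 (p : ℕ) (hp : p.Prime) :
    ∀ lam : ℝ, 0 < lam →
      |theta p lam - (lam / ((p : ℝ) - 1) - Real.log lam / Real.log p)| ≤ 1 := by
  intro lam hlam
  have hp1 : (1 : ℝ) < p := by exact_mod_cast hp.one_lt
  obtain ⟨n, hn_le, hlt_succ⟩ := exists_mem_Ico_zpow hlam hp1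
  have hpn : (0 : ℝ) < (p : ℝ) ^ n := by positivity
  have hmu : ((p : ℝ) ^ n)⁻¹ * lam ∈ Icc 1 (p : ℝ) := by
    rw [zpow_add_one₀ (by positivity)] at hlt_succ
    exact ⟨(le_inv_mul_iff₀ hpn).2 (by simpa using hn_le), (inv_mul_le_iff₀ hpn).2 hlt_succ.le⟩
  change |thetaDefect p lam| ≤ 1
  rw [← mul_inv_cancel_left₀ hpn.ne' lam, thetaDefect_zpow_mul hp.one_lt (by positivity)]
  exact abs_thetaDefect_le_one_of_mem_Icc hp.two_le hmu
end

section
/- Fix a prime p. For every f ∈ K(C_p) there exist finite families (h_i, μ_i) and (h'_j, μ'_j) with h_i, h'_j ∈ H_p, h_i > 0, h'_j > 0, μ_i, μ'_j ∈ ℝ satisfying h_i ≤ μ_i < p·h_i and h'_j ≤ μ'_j < p·h'_j, an element h ∈ H_p with (p−1)h = Σ_i h_i − Σ_j h'_j, and a constant c ∈ ℝ, such that f(λ) = Σ_i Θ_{h_i,μ_i}(λ) − Σ_j Θ_{h'_j,μ'_j}(λ) − hλ + c for all λ > 0. -/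
/-- `f` is piecewise affine on `(0,∞)` with all slopes in `S`. -/
def PiecewiseAffineWith (S : Set ℝ) (f : ℝ → ℝ) : Prop :=
  ∀ u v : ℝ, 0 < u → u < v →
    ∃ (n : ℕ) (t : ℕ → ℝ), 0 < n ∧ t 0 = u ∧ t n = v ∧ (∀ i < n, t i < t (i + 1)) ∧
      ∀ i < n, ∃ s ∈ S, ∃ c : ℝ, ∀ x ∈ Set.Icc (t i) (t (i + 1)), f x = s * x + c

/-- `K(C_p)`: continuous piecewise affine functions on `(0,∞)` with slopes in `H_p` satisfying
`f(pλ) = f(λ)`. -/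
def KCp (p : ℕ) (f : ℝ → ℝ) : Prop :=
  ContinuousOn f (Set.Ioi 0) ∧ PiecewiseAffineWith (HpSet p) f ∧
    ∀ lam : ℝ, 0 < lam → f (p * lam) = f lam

/-- `Θ_{h,μ}(λ) = μ θ(μ⁻¹ h λ)`. -/
noncomputable def ThetaF (p : ℕ) (h μ lam : ℝ) : ℝ := μ * theta p (μ⁻¹ * h * lam)

open Set Finset Real Filter

def HpSet.subring (p : ℕ) (hp : p ≠ 0) : Subring ℝ where
  carrier := HpSet p
  zero_mem' := ⟨0, 0, by simp⟩
  one_mem' := ⟨1, 0, by simp⟩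
  neg_mem' := by
    rintro _ ⟨a, n, rfl⟩
    exact ⟨-a, n, by push_cast; ring⟩
  add_mem' := by
    rintro _ _ ⟨a, n, rfl⟩ ⟨b, m, rfl⟩
    refine ⟨a * p ^ m + b * p ^ n, n + m, ?_⟩
    have : (p : ℝ) ≠ 0 := by exact_mod_cast hp
    push_cast
    field_simp
    ring
  mul_mem' := by
    rintro _ _ ⟨a, n, rfl⟩ ⟨b, m, rfl⟩
    exact ⟨a * b, n + m, by push_cast; ring⟩

theorem HpSet.exists_pos_sub_eq {p : ℕ} (hp : p ≠ 0) {x : ℝ} (hx : x ∈ HpSet p) :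
    ∃ u v : ℝ, (u ∈ HpSet p ∧ 0 < u) ∧ (v ∈ HpSet p ∧ 0 < v) ∧ u - v = x := by
  obtain ⟨N, hN⟩ := exists_nat_gt |x|
  have hNmem : (N : ℝ) ∈ HpSet p := natCast_mem (HpSet.subring p hp) N
  refine ⟨x + N, N, ⟨(HpSet.subring p hp).add_mem hx hNmem, ?_⟩,
    ⟨hNmem, (abs_nonneg x).trans_lt hN⟩, by ring⟩
  linarith [neg_abs_le x]

theorem eqOn_Ioi_of_eqOn_Ico_of_mul_invariant {a : ℝ} (ha : 1 < a) {F G : ℝ → ℝ}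
    (hF : ∀ x, 0 < x → F (a * x) = F x) (hG : ∀ x, 0 < x → G (a * x) = G x)
    (hFG : EqOn F G (Ico 1 a)) : EqOn F G (Ioi 0) := by
  intro x hx
  have hper : Function.Periodic (fun u => F (exp u) - G (exp u)) (log a) := by
    intro u
    simp only [exp_add, exp_log (zero_lt_one.trans ha), mul_comm _ a, hF _ (exp_pos u),
      hG _ (exp_pos u)]
  obtain ⟨y, ⟨hy0, hya⟩, hxy⟩ := hper.exists_mem_Ico₀ (log_pos ha) (log x)
  have hy : exp y ∈ Ico 1 a := ⟨one_le_exp hy0, (lt_log_iff_exp_lt (zero_lt_one.trans ha)).mp hya⟩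
  simpa only [exp_log hx, hFG hy, sub_self, sub_eq_zero] using hxy

theorem eqOn_Ioi_of_eqOn_Icc_of_mul_eq_sub {a B : ℝ} (ha : 1 < a) {F G : ℝ → ℝ}
    (hF : ∀ x, 0 < x → F (a * x) = F x) (hG : ∀ x, 0 < x → G (a * x) = G x - B)
    (hFG : EqOn F G (Icc 1 a)) : EqOn F G (Ioi 0) := by
  have hB : B = 0 := by
    have h1 := hG 1 one_pos
    rw [mul_one, ← hFG ⟨ha.le, le_rfl⟩, ← hFG ⟨le_rfl, ha.le⟩, ← mul_one a, hF 1 one_pos] at h1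
    linarith
  refine eqOn_Ioi_of_eqOn_Ico_of_mul_invariant ha hF (fun x hx => ?_) (hFG.mono Ico_subset_Icc_self)
  rw [hG x hx, hB, sub_zero]

section Theta

variable {p : ℕ} (hp : 1 < p)
include hp

theorem summable_max_zero_one_sub_pow_mul {x : ℝ} (hx : 0 < x) :
    Summable fun m : ℕ => max 0 (1 - (p : ℝ) ^ m * x) := by
  have hp' : (1 : ℝ) < p := by exact_mod_cast hp
  obtain ⟨N, hN⟩ := eventually_atTop.mp
    (((tendsto_pow_atTop_atTop_of_one_lt hp').atTop_mul_const hx).eventually_ge_atTop 1)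
  refine summable_of_ne_finset_zero (s := range N) fun m hm => ?_
  simpa using hN m (by simpa using hm)

theorem summable_max_zero_inv_pow_mul_sub_one {x : ℝ} :
    Summable fun m : ℕ => max 0 (((p : ℝ) ^ m)⁻¹ * x - 1) := by
  have hp' : (1 : ℝ) < p := by exact_mod_cast hp
  obtain ⟨N, hN⟩ := eventually_atTop.mp
    ((tendsto_pow_atTop_atTop_of_one_lt hp').eventually_ge_atTop x)
  refine summable_of_ne_finset_zero (s := range N) fun m hm => ?_
  have := inv_mul_le_one_of_le₀ (hN m (by simpa using hm)) (by positivity)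
  simpa using this

theorem theta_eq_max_zero_one_sub {x : ℝ} (hx₁ : (p : ℝ)⁻¹ ≤ x) (hx₂ : x ≤ p) :
    theta p x = max 0 (1 - x) := by
  have hp' : (1 : ℝ) ≤ p := by exact_mod_cast hp.le
  have hplus : fPlus p x = max 0 (1 - x) := by
    rw [fPlus, tsum_eq_single 0 fun m hm => ?_]
    · simp
    have : 1 ≤ (p : ℝ) ^ m * x := calc
      (1 : ℝ) = p * (p : ℝ)⁻¹ := (mul_inv_cancel₀ (by positivity)).symm
      _ ≤ (p : ℝ) ^ m * x := mul_le_mul (le_self_pow₀ hp' hm) hx₁ (by positivity) (by positivity)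
    simpa using this
  have hminus : fMinus p x = 0 := by
    refine (tsum_congr fun m => ?_).trans tsum_zero
    have := inv_mul_le_one_of_le₀ (hx₂.trans (le_self_pow₀ hp' m.succ_ne_zero)) (by positivity)
    simpa using this
  rw [theta, hplus, hminus, add_zero]

theorem theta_natCast_mul {x : ℝ} (hx : 0 < x) : theta p (p * x) = theta p x + x - 1 := by
  have hp0 : (p : ℝ) ≠ 0 := by positivity
  have hplus : fPlus p x = max 0 (1 - x) + fPlus p (p * x) := by
    simp only [fPlus, (summable_max_zero_one_sub_pow_mul hp hx).tsum_eq_zero_add, pow_succ,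
      mul_assoc, pow_zero, one_mul]
  have hminus : fMinus p (p * x) = max 0 (x - 1) + fMinus p x := by
    have h := (summable_max_zero_inv_pow_mul_sub_one hp (x := x)).tsum_eq_zero_add
    simp only [fMinus, pow_succ, mul_inv, mul_assoc, inv_mul_cancel_left₀ hp0] at h ⊢
    simpa using h
  rw [theta, theta, hminus, hplus]
  rcases le_total x 1 with h | h
  · rw [max_eq_left (by linarith), max_eq_right (by linarith)]; ring
  · rw [max_eq_right (by linarith), max_eq_left (by linarith)]; ring

theorem ThetaF_natCast_mul {h μ x : ℝ} (hh : 0 < h) (hμ : 0 < μ) (hx : 0 < x) :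
    ThetaF p h μ (p * x) = ThetaF p h μ x + h * x - μ := by
  rw [ThetaF, ThetaF, mul_left_comm _ (p : ℝ), theta_natCast_mul hp (by positivity)]
  field_simp

theorem ThetaF_mul_eq_mul_max {h τ x : ℝ} (hh : 0 < h) (hτ : τ ∈ Icc 1 (p : ℝ))
    (hx : x ∈ Icc 1 (p : ℝ)) : ThetaF p h (h * τ) x = h * max 0 (τ - x) := by
  have hτ0 : 0 < τ := zero_lt_one.trans_le hτ.1
  have hy : (h * τ)⁻¹ * h * x = x / τ := by field_simp
  have hy₁ : (p : ℝ)⁻¹ ≤ x / τ := by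
    rw [le_div_iff₀ hτ0, inv_mul_le_iff₀ (by positivity)]
    nlinarith [hx.1, hτ.2]
  have hy₂ : x / τ ≤ p := by
    rw [div_le_iff₀ hτ0]
    nlinarith [hx.2, hτ.1]
  rw [ThetaF, hy, theta_eq_max_zero_one_sub hp hy₁ hy₂, mul_max_of_nonneg _ _ (by positivity)]
  field_simp
  rw [mul_max_of_nonneg _ _ hh.le]
  ring_nf

end Theta

noncomputable def thetaCombination (p : ℕ) {k l : ℕ} (hs μs : Fin k → ℝ) (hs' μs' : Fin l → ℝ)
    (h c x : ℝ) : ℝ :=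
  (∑ i, ThetaF p (hs i) (μs i) x) - (∑ j, ThetaF p (hs' j) (μs' j) x) - h * x + c

section ThetaCombination

variable {p : ℕ} (hp : 1 < p) {k l : ℕ} {hs μs : Fin k → ℝ} {hs' μs' : Fin l → ℝ} {h : ℝ}
include hp

theorem thetaCombination_natCast_mul (hpos : ∀ i, 0 < hs i ∧ 0 < μs i)
    (hpos' : ∀ j, 0 < hs' j ∧ 0 < μs' j) (hh : ((p : ℝ) - 1) * h = (∑ i, hs i) - ∑ j, hs' j)
    (c : ℝ) {x : ℝ} (hx : 0 < x) :
    thetaCombination p hs μs hs' μs' h c (p * x) =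
      thetaCombination p hs μs hs' μs' h c x - ((∑ i, μs i) - ∑ j, μs' j) := by
  simp only [thetaCombination, ThetaF_natCast_mul hp (hpos _).1 (hpos _).2 hx,
    ThetaF_natCast_mul hp (hpos' _).1 (hpos' _).2 hx, sum_sub_distrib, sum_add_distrib,
    ← sum_mul]
  linear_combination (-x) * hh

theorem thetaCombination_eq_of_mem_Icc {τ : Fin k → ℝ} {τ' : Fin l → ℝ}
    (hpos : ∀ i, 0 < hs i ∧ τ i ∈ Icc 1 (p : ℝ)) (hpos' : ∀ j, 0 < hs' j ∧ τ' j ∈ Icc 1 (p : ℝ))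
    (c : ℝ) {x : ℝ} (hx : x ∈ Icc 1 (p : ℝ)) :
    thetaCombination p hs (fun i => hs i * τ i) hs' (fun j => hs' j * τ' j) h c x =
      (∑ i, hs i * max 0 (τ i - x)) - (∑ j, hs' j * max 0 (τ' j - x)) - h * x + c := by
  simp only [thetaCombination, ThetaF_mul_eq_mul_max hp (hpos _).1 (hpos _).2 hx,
    ThetaF_mul_eq_mul_max hp (hpos' _).1 (hpos' _).2 hx]

end ThetaCombination

theorem eq_sum_mul_max_of_affine_pieces {f : ℝ → ℝ} {t s c : ℕ → ℝ} (n : ℕ)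
    (ht : ∀ i < n + 1, t i < t (i + 1))
    (hf : ∀ i < n + 1, ∀ x ∈ Icc (t i) (t (i + 1)), f x = s i * x + c i)
    {x : ℝ} (hx : x ∈ Icc (t 0) (t (n + 1))) :
    f x = ∑ j ∈ range n, (s (j + 1) - s j) * max 0 (t (j + 1) - x)
      + s n * (x - t (n + 1)) + f (t (n + 1)) := by
  induction n generalizing x with
  | zero =>
    have hx₁ := hf 0 zero_lt_one (t 1) ⟨(ht 0 zero_lt_one).le, le_rfl⟩
    simp only [range_zero, sum_empty, hf 0 zero_lt_one x hx, hx₁]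
    ring
  | succ n ih =>
    have hmono : StrictMonoOn t (Set.Iic (n + 2)) :=
      strictMonoOn_Iic_of_lt_succ fun i hi => ht i hi
    have hlast := hf (n + 1) (lt_add_one _)
    have hend := hlast (t (n + 2)) ⟨(ht (n + 1) (lt_add_one _)).le, le_rfl⟩
    rcases le_total x (t (n + 1)) with hxn | hxn
    · have hstart := hlast (t (n + 1)) ⟨le_rfl, (ht (n + 1) (lt_add_one _)).le⟩
      rw [ih (fun i hi => ht i (by omega)) (fun i hi => hf i (by omega)) ⟨hx.1, hxn⟩,
        sum_range_succ, max_eq_right (sub_nonneg.mpr hxn)]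
      linear_combination hstart - hend
    · have hkinks : ∀ j ∈ range (n + 1), (s (j + 1) - s j) * max 0 (t (j + 1) - x) = 0 := by
        intro j hj
        have hj : j + 1 ≤ n + 1 := mem_range.mp hj
        have : t (j + 1) ≤ t (n + 1) :=
          hmono.monotoneOn (by simp only [Set.mem_Iic]; omega) (by simp) hj
        rw [max_eq_left (by linarith), mul_zero]
      rw [sum_eq_zero hkinks, hlast x ⟨hxn, hx.2⟩, hend]
      ring

theorem PiecewiseAffineWith.exists_kinks {p : ℕ} (hp : 1 < p) {f : ℝ → ℝ}
    (hf : PiecewiseAffineWith (HpSet p) f) :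
    ∃ (m : ℕ) (τ δ : Fin (m + 1) → ℝ) (s : ℝ),
      (∀ j, τ j ∈ Ico 1 (p : ℝ) ∧ δ j ∈ HpSet p) ∧ s ∈ HpSet p ∧ ∑ j, δ j = (1 - p) * s ∧
      ∀ x ∈ Icc 1 (p : ℝ), f x = ∑ j, δ j * max 0 (τ j - x) + s * (x - p) + f p := by
  obtain ⟨n, t, hn, ht0, htn, ht, hpieces⟩ := hf 1 p one_pos (by exact_mod_cast hp)
  obtain ⟨m, rfl⟩ := Nat.exists_eq_add_one_of_ne_zero hn.ne'
  choose! s hsH c hc using hpieces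
  have hmono : StrictMonoOn t (Set.Iic (m + 1)) := strictMonoOn_Iic_of_lt_succ fun i hi => ht i hi
  let H := HpSet.subring p (by omega)
  -- The extra kink at `t 0 = 1` vanishes on `[1, p]`; its size `s 0 - p * s m` is the slope jump
  -- at `1` of the `p`-invariant extension of `f`.
  refine ⟨m, fun j => t j, Fin.cons (s 0 - p * s m) fun j => s (j + 1) - s j, s m,
    fun j => ⟨⟨?_, ?_⟩, ?_⟩, hsH m (lt_add_one m), ?_, fun x hx => ?_⟩
  · exact ht0 ▸ hmono.monotoneOn (by simp) (by simp) (Nat.zero_le _)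
  · exact htn ▸ hmono (by simp) (by simp) j.isLt
  · refine Fin.cases ?_ (fun j => ?_) j
    · exact H.sub_mem (hsH 0 (by omega)) (H.mul_mem (natCast_mem H p) (hsH m (lt_add_one m)))
    · exact H.sub_mem (hsH _ (by simp)) (hsH j (by omega))
  · rw [Fin.sum_univ_succ, Fin.cons_zero]
    simp only [Fin.cons_succ]
    rw [Fin.sum_univ_eq_sum_range (fun j => s (j + 1) - s j), sum_range_sub]
    ring
  · have hrep := eq_sum_mul_max_of_affine_pieces m ht hc (x := x) (by rwa [ht0, htn])
    rw [htn] at hrep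
    rw [Fin.sum_univ_succ, Fin.cons_zero]
    simp only [Fin.cons_succ, Fin.val_succ, Fin.val_zero, ht0, max_eq_left (sub_nonpos.mpr hx.1),
      mul_zero, zero_add]
    rw [Fin.sum_univ_eq_sum_range (fun j => (s (j + 1) - s j) * max 0 (t (j + 1) - x)), hrep]

/-- canonical decomposition in theta functions. Every `f ∈ K(C_p)` can be
written as `f(λ) = Σ_i Θ_{h_i,μ_i}(λ) − Σ_j Θ_{h'_j,μ'_j}(λ) − hλ + c` with
`h_i ≤ μ_i < p h_i`, `h'_j ≤ μ'_j < p h'_j`, `(p−1)h = Σ h_i − Σ h'_j` and `c ∈ ℝ`. -/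
theorem statement10 (p : ℕ) (hp : p.Prime) (f : ℝ → ℝ) (hf : KCp p f) :
    ∃ (k l : ℕ) (hs μs : Fin k → ℝ) (hs' μs' : Fin l → ℝ) (h c : ℝ),
      (∀ i, hs i ∈ HpSet p ∧ 0 < hs i ∧ hs i ≤ μs i ∧ μs i < p * hs i) ∧
      (∀ j, hs' j ∈ HpSet p ∧ 0 < hs' j ∧ hs' j ≤ μs' j ∧ μs' j < p * hs' j) ∧
      h ∈ HpSet p ∧ ((p : ℝ) - 1) * h = (∑ i, hs i) - (∑ j, hs' j) ∧
      ∀ lam : ℝ, 0 < lam →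
        f lam = (∑ i, ThetaF p (hs i) (μs i) lam)
          - (∑ j, ThetaF p (hs' j) (μs' j) lam) - h * lam + c := by
  obtain ⟨-, hpa, hper⟩ := hf
  obtain ⟨m, τ, δ, s, hτδ, hs, hδ, hfτ⟩ := hpa.exists_kinks hp.one_lt
  choose e e' he he' heδ using fun j => HpSet.exists_pos_sub_eq hp.ne_zero (hτδ j).2
  have hτ j : τ j ∈ Icc 1 (p : ℝ) := Ico_subset_Icc_self (hτδ j).1
  have hμ {u : ℝ} (hu : 0 < u) j : 0 < u * τ j ∧ u ≤ u * τ j ∧ u * τ j < p * u :=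
    ⟨mul_pos hu (zero_lt_one.trans_le (hτ j).1), le_mul_of_one_le_right hu.le (hτ j).1,
      mul_comm u (τ j) ▸ mul_lt_mul_of_pos_right (hτδ j).1.2 hu⟩
  have hh : ((p : ℝ) - 1) * -s = (∑ j, e j) - ∑ j, e' j := by
    rw [← sum_sub_distrib]
    simp only [heδ _]
    linarith
  have hfR : EqOn f (thetaCombination p e (fun j => e j * τ j) e' (fun j => e' j * τ j) (-s)
      (f p - s * p)) (Icc 1 p) := fun x hx => by
    rw [thetaCombination_eq_of_mem_Icc hp.one_lt (fun j => ⟨(he j).2, hτ j⟩)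
      (fun j => ⟨(he' j).2, hτ j⟩) _ hx, hfτ x hx, ← sum_sub_distrib]
    simp only [← sub_mul, heδ _]
    ring
  refine ⟨m + 1, m + 1, e, _, e', _, -s, f p - s * p,
    fun j => ⟨(he j).1, (he j).2, (hμ (he j).2 j).2⟩,
    fun j => ⟨(he' j).1, (he' j).2, (hμ (he' j).2 j).2⟩,
    (HpSet.subring p hp.ne_zero).neg_mem hs, hh,
    eqOn_Ioi_of_eqOn_Icc_of_mul_eq_sub (by exact_mod_cast hp.one_lt) hper
      (fun x hx => thetaCombination_natCast_mul hp.one_lt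
        (fun j => ⟨(he j).2, (hμ (he j).2 j).1⟩) (fun j => ⟨(he' j).2, (hμ (he' j).2 j).1⟩)
        hh _ hx) hfR⟩
end
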